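/- arXiv:2310.09169 — 8 statements merged into one kernel-verified Lean document; each statement's English description precedes it below -/
import Mathlib

section
/- Let X be a random variable on the nonnegative integers with mean ν and finite q-th moment m_q = E[X^q] for some q ∈ (1,2]. There is a constant c_q depending only on q such that for all s ∈ [0,1], G(s) ≤ 1 + ν(s-1) + c_q m_q (1-s)^q, where G is the generating function of X. -/
/-!
Termwise, `(1 - t) ^ k - (1 - k t)` is at most `k t` (as `(1 - t) ^ k ≤ 1`) and at most `(k t) ^ 2`
(second-order Taylor bound), hence at most `(k t) ^ q` for `q ∈ [1, 2]`. Taking `t = 1 - s`,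
multiplying by `P(X = k)` and summing gives the bound with `c_q = 1`.
-/

open Real

lemma one_sub_pow_le_one_sub_mul_add_sq {t : ℝ} (ht0 : 0 ≤ t) (ht1 : t ≤ 1) (k : ℕ) :
    (1 - t) ^ k ≤ 1 - k * t + (k * t) ^ 2 := by
  induction k with
  | zero => simp
  | succ n ih =>
    have hstep := mul_le_mul_of_nonneg_right ih (sub_nonneg.2 ht1)
    rw [pow_succ]
    push_cast
    nlinarith [mul_nonneg (mul_nonneg (sq_nonneg (n : ℝ)) (sq_nonneg t)) ht0]

lemma min_le_rpow_of_one_le_of_le_two {x q : ℝ} (hx : 0 ≤ x) (hq1 : 1 ≤ q) (hq2 : q ≤ 2) :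
    min x (x ^ 2) ≤ x ^ q := by
  rcases le_total x 1 with hx1 | hx1
  · calc min x (x ^ 2) ≤ x ^ (2 : ℝ) := by rw [rpow_two]; exact min_le_right _ _
      _ ≤ x ^ q := rpow_le_rpow_of_exponent_ge' hx hx1 (by linarith) hq2
  · exact (min_le_left _ _).trans (self_le_rpow_of_one_le hx1 hq1)

lemma one_sub_pow_le_one_sub_mul_add_rpow {t q : ℝ} (ht0 : 0 ≤ t) (ht1 : t ≤ 1)
    (hq1 : 1 ≤ q) (hq2 : q ≤ 2) (k : ℕ) :
    (1 - t) ^ k ≤ 1 - k * t + (k : ℝ) ^ q * t ^ q := by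
  have hkt : 0 ≤ (k : ℝ) * t := mul_nonneg k.cast_nonneg ht0
  have hone : (1 - t) ^ k ≤ 1 := pow_le_one₀ (by linarith) (by linarith)
  have hsq := one_sub_pow_le_one_sub_mul_add_sq ht0 ht1 k
  have hmin := min_le_rpow_of_one_le_of_le_two hkt hq1 hq2
  rw [← mul_rpow k.cast_nonneg ht0]
  rcases min_choice ((k : ℝ) * t) (((k : ℝ) * t) ^ 2) with h | h <;> rw [h] at hmin <;> linarith

lemma tsum_mul_pow_le_of_hasSum_rpow_mul {μ : ℕ → ℝ} {ν m q s : ℝ} (hμ : ∀ k, 0 ≤ μ k)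
    (hμ1 : HasSum μ 1) (hν : HasSum (fun k : ℕ => (k : ℝ) * μ k) ν)
    (hm : HasSum (fun k : ℕ => (k : ℝ) ^ q * μ k) m) (hq1 : 1 ≤ q) (hq2 : q ≤ 2)
    (hs0 : 0 ≤ s) (hs1 : s ≤ 1) :
    ∑' k, μ k * s ^ k ≤ 1 + ν * (s - 1) + m * (1 - s) ^ q := by
  have hbound : HasSum (fun k : ℕ => μ k + k * μ k * (s - 1) + k ^ q * μ k * (1 - s) ^ q)
      (1 + ν * (s - 1) + m * (1 - s) ^ q) :=
    (hμ1.add (hν.mul_right _)).add (hm.mul_right _)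
  have hterm (k : ℕ) :
      μ k * s ^ k ≤ μ k + k * μ k * (s - 1) + k ^ q * μ k * (1 - s) ^ q := by
    have h := one_sub_pow_le_one_sub_mul_add_rpow (t := 1 - s) (by linarith) (by linarith)
      hq1 hq2 k
    rw [sub_sub_cancel] at h
    linarith [mul_le_mul_of_nonneg_left h (hμ k)]
  have hG : Summable fun k => μ k * s ^ k :=
    .of_nonneg_of_le (fun k => mul_nonneg (hμ k) (pow_nonneg hs0 k))
      (fun k => mul_le_of_le_one_right (hμ k) (pow_le_one₀ hs0 hs1)) hμ1.summable
  exact hbound.tsum_eq ▸ hG.tsum_le_tsum hterm hbound.summable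

/-- For an ℕ-valued random variable with pmf `μ`, mean `ν` and finite `q`-th moment
`m_q` with `q ∈ (1,2]`, there is a constant `c_q` depending only on `q` with
`G s ≤ 1 + ν (s-1) + c_q m_q (1-s)^q` for all `s ∈ [0,1]`. -/
theorem stmt1 (q : ℝ) (hq1 : 1 < q) (hq2 : q ≤ 2) :
    ∃ c : ℝ, 0 < c ∧
      ∀ (μ : ℕ → ℝ), (∀ k, 0 ≤ μ k) → (∑' k, μ k = 1) →
        ∀ ν mq : ℝ, HasSum (fun (k : ℕ) => (k : ℝ) * μ k) ν →
          HasSum (fun (k : ℕ) => (k : ℝ) ^ q * μ k) mq →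
          ∀ s ∈ Set.Icc (0 : ℝ) 1,
            ∑' k, μ k * s ^ k ≤ 1 + ν * (s - 1) + c * mq * (1 - s) ^ q := by
  refine ⟨1, one_pos, fun μ hμ hsum1 ν mq hν hmq s ⟨hs0, hs1⟩ => ?_⟩
  have hμ1 : HasSum μ 1 := by
    by_cases hμs : Summable μ
    · exact hsum1 ▸ hμs.hasSum
    · simp [tsum_eq_zero_of_not_summable hμs] at hsum1
  rw [one_mul]
  exact tsum_mul_pow_le_of_hasSum_rpow_mul hμ hμ1 hν hmq hq1.le hq2 hs0 hs1
end

section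
/- Let G be the generating function of a probability distribution μ on the positive integers with μ(1) ∈ (0,1), let α ∈ (0,1), and let (u_j) be defined by u_{j+1} = G(u_j) with u_0 ≤ 1-α. Then there is a constant C_α depending only on μ and α such that for all j ≥ 1, u_0 μ(1)^j ≤ u_j ≤ C_α u_0 μ(1)^j. -/
/-- Iterates of the generating function `G` of a distribution `μ` on positive integers
with `μ 1 ∈ (0,1)`, started from `u₀ ≤ 1 - α`, satisfy
`u₀ μ(1)^j ≤ u_j ≤ C_α u₀ μ(1)^j` for all `j ≥ 1`. -/
theorem stmt3 (μ : ℕ → ℝ) (hμnn : ∀ k, 0 ≤ μ k) (hμsum : ∑' k, μ k = 1)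
    (hμ0 : μ 0 = 0) (hμ1pos : 0 < μ 1) (hμ1lt : μ 1 < 1)
    (α : ℝ) (hα : α ∈ Set.Ioo (0 : ℝ) 1)
    (u : ℕ → ℝ) (hu0nn : 0 ≤ u 0) (hu0 : u 0 ≤ 1 - α)
    (hrec : ∀ j, u (j + 1) = ∑' k, μ k * (u j) ^ k) :
    ∃ C : ℝ, ∀ j, 1 ≤ j → u 0 * μ 1 ^ j ≤ u j ∧ u j ≤ C * (u 0 * μ 1 ^ j) := by
  obtain ⟨hα0, hα1⟩ := hα
  have hsumμ : Summable μ := by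
    by_contra h
    rw [tsum_eq_zero_of_not_summable h] at hμsum
    norm_num at hμsum
  set r : ℝ := 1 - α * (1 - μ 1) with hrdef
  have hr1 : r < 1 := by nlinarith
  have hr0 : 0 < r := by nlinarith
  -- summability of the generating series
  have hGsum : ∀ s : ℝ, 0 ≤ s → s ≤ 1 → Summable (fun k => μ k * s ^ k) := by
    intro s hs0 hs1
    apply Summable.of_nonneg_of_le (fun k => mul_nonneg (hμnn k) (pow_nonneg hs0 k)) (fun k => ?_) hsumμ
    calc μ k * s ^ k ≤ μ k * 1 :=
          mul_le_mul_of_nonneg_left (pow_le_one₀ hs0 hs1) (hμnn k)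
      _ = μ k := mul_one _
  -- tail mass
  have htail : ∑' k, μ (k + 2) = 1 - μ 1 := by
    have h1 := Summable.tsum_eq_zero_add hsumμ
    have h2 := Summable.tsum_eq_zero_add ((summable_nat_add_iff 1).2 hsumμ)
    rw [hμsum, hμ0] at h1
    rw [h2] at h1
    have : (fun n => μ (n + 1 + 1)) = fun n => μ (n + 2) := by
      funext n; ring_nf
    rw [this] at h1
    linarith
  -- lower bound for G
  have hGlb : ∀ s : ℝ, 0 ≤ s → s ≤ 1 → μ 1 * s ≤ ∑' k, μ k * s ^ k := by
    intro s hs0 hs1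
    have := Summable.le_tsum (hGsum s hs0 hs1) 1 (fun j _ => mul_nonneg (hμnn j) (pow_nonneg hs0 j))
    simpa using this
  -- nonnegativity of G
  have hGnn : ∀ s : ℝ, 0 ≤ s → s ≤ 1 → 0 ≤ ∑' k, μ k * s ^ k := by
    intro s hs0 hs1
    exact tsum_nonneg fun k => mul_nonneg (hμnn k) (pow_nonneg hs0 k)
  -- upper bound for G
  have hGub : ∀ s : ℝ, 0 ≤ s → s ≤ 1 →
      ∑' k, μ k * s ^ k ≤ μ 1 * s + (1 - μ 1) * s ^ 2 := by
    intro s hs0 hs1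
    have hS := hGsum s hs0 hs1
    have h1 := Summable.tsum_eq_zero_add hS
    have h2 := Summable.tsum_eq_zero_add ((summable_nat_add_iff 1).2 hS)
    rw [h2] at h1
    have hrw : (fun n => μ (n + 1 + 1) * s ^ (n + 1 + 1)) =
        fun n => μ (n + 2) * s ^ (n + 2) := by
      funext n; ring_nf
    rw [hrw] at h1
    have htailsum : Summable (fun n => μ (n + 2) * s ^ (n + 2)) := by
      have := (summable_nat_add_iff 2).2 hS
      simpa using this
    have htailsum2 : Summable (fun n => μ (n + 2) * s ^ 2) :=
      ((summable_nat_add_iff 2).2 hsumμ).mul_right _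
    have hle : ∑' n, μ (n + 2) * s ^ (n + 2) ≤ ∑' n, μ (n + 2) * s ^ 2 := by
      apply Summable.tsum_le_tsum _ htailsum htailsum2
      intro n
      have : s ^ (n + 2) ≤ s ^ 2 := by
        apply pow_le_pow_of_le_one hs0 hs1
        omega
      exact mul_le_mul_of_nonneg_left this (hμnn _)
    have heq : ∑' n, μ (n + 2) * s ^ 2 = (1 - μ 1) * s ^ 2 := by
      rw [tsum_mul_right, htail]
    calc ∑' k, μ k * s ^ k = μ 0 * s ^ 0 + (μ 1 * s ^ 1 + ∑' n, μ (n + 2) * s ^ (n + 2)) := h1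
      _ = μ 1 * s + ∑' n, μ (n + 2) * s ^ (n + 2) := by rw [hμ0]; ring
      _ ≤ μ 1 * s + (1 - μ 1) * s ^ 2 := by rw [← heq]; linarith
  -- invariant: 0 ≤ u j ≤ (1-α) r^j
  have hinv : ∀ j, 0 ≤ u j ∧ u j ≤ (1 - α) * r ^ j := by
    intro j
    induction j with
    | zero => simpa using ⟨hu0nn, hu0⟩
    | succ n ih =>
      obtain ⟨h0, h1⟩ := ih
      have hle1α : u n ≤ 1 - α := by
        have : (1 - α) * r ^ n ≤ (1 - α) * 1 := by
          apply mul_le_mul_of_nonneg_left (pow_le_one₀ hr0.le hr1.le) (by linarith)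
        linarith
      have hle1 : u n ≤ 1 := by linarith
      constructor
      · rw [hrec n]; exact hGnn _ h0 hle1
      · rw [hrec n]
        calc ∑' k, μ k * u n ^ k ≤ μ 1 * u n + (1 - μ 1) * u n ^ 2 := hGub _ h0 hle1
          _ ≤ μ 1 * u n + (1 - μ 1) * ((1 - α) * u n) := by
              have : u n ^ 2 ≤ (1 - α) * u n := by nlinarith
              nlinarith
          _ = r * u n := by rw [hrdef]; ring
          _ ≤ r * ((1 - α) * r ^ n) := by nlinarith
          _ = (1 - α) * r ^ (n + 1) := by ring
  -- lower bound
  have hlb : ∀ j, u 0 * μ 1 ^ j ≤ u j := by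
    intro j
    induction j with
    | zero => simp
    | succ n ih =>
      have ⟨h0, h1⟩ := hinv n
      have hle1 : u n ≤ 1 := by
        have : (1 - α) * r ^ n ≤ 1 := by nlinarith [pow_le_one₀ (n := n) hr0.le hr1.le]
        linarith
      calc u 0 * μ 1 ^ (n + 1) = μ 1 * (u 0 * μ 1 ^ n) := by ring
        _ ≤ μ 1 * u n := by nlinarith
        _ ≤ ∑' k, μ k * u n ^ k := hGlb _ h0 hle1
        _ = u (n + 1) := (hrec n).symm
  -- constant
  set c : ℝ := (1 - μ 1) / μ 1 with hcdef
  have hc0 : 0 ≤ c := div_nonneg (by linarith) hμ1pos.le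
  -- partial sums of u are bounded
  have hS : ∀ j, ∑ i ∈ Finset.range j, u i ≤ (1 - α) / (1 - r) := by
    intro j
    calc ∑ i ∈ Finset.range j, u i ≤ ∑ i ∈ Finset.range j, (1 - α) * r ^ i :=
          Finset.sum_le_sum fun i _ => (hinv i).2
      _ = (1 - α) * ∑ i ∈ Finset.range j, r ^ i := by rw [Finset.mul_sum]
      _ ≤ (1 - α) * (1 - r)⁻¹ := by
          apply mul_le_mul_of_nonneg_left _ (by linarith)
          have hsum := Summable.sum_le_tsum (Finset.range j)
            (fun i _ => pow_nonneg hr0.le i) (summable_geometric_of_lt_one hr0.le hr1)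
          rw [tsum_geometric_of_lt_one hr0.le hr1] at hsum
          exact hsum
      _ = (1 - α) / (1 - r) := by rw [div_eq_mul_inv]
  -- upper bound by induction with exponential of partial sums
  have hub : ∀ j, u j ≤ u 0 * μ 1 ^ j * Real.exp (c * ∑ i ∈ Finset.range j, u i) := by
    intro j
    induction j with
    | zero => simp
    | succ n ih =>
      have ⟨h0, h1⟩ := hinv n
      have hle1 : u n ≤ 1 := by
        have : (1 - α) * r ^ n ≤ 1 := by nlinarith [pow_le_one₀ (n := n) hr0.le hr1.le]
        linarith
      have step : u (n + 1) ≤ μ 1 * u n * (1 + c * u n) := by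
        rw [hrec n]
        calc ∑' k, μ k * u n ^ k ≤ μ 1 * u n + (1 - μ 1) * u n ^ 2 := hGub _ h0 hle1
          _ = μ 1 * u n * (1 + c * u n) := by
              rw [hcdef]; field_simp
      have hexp : 1 + c * u n ≤ Real.exp (c * u n) := by
        have := Real.add_one_le_exp (c * u n)
        linarith
      calc u (n + 1) ≤ μ 1 * u n * (1 + c * u n) := step
        _ ≤ μ 1 * (u 0 * μ 1 ^ n * Real.exp (c * ∑ i ∈ Finset.range n, u i)) *
              Real.exp (c * u n) := by
            have h1' : μ 1 * u n ≤ μ 1 * (u 0 * μ 1 ^ n * Real.exp (c * ∑ i ∈ Finset.range n, u i)) :=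
              mul_le_mul_of_nonneg_left ih hμ1pos.le
            have h2' : (1 + c * u n) ≤ Real.exp (c * u n) := hexp
            have hnn1 : 0 ≤ μ 1 * u n := by positivity
            have hnn2 : 0 ≤ 1 + c * u n := by nlinarith [mul_nonneg hc0 h0]
            nlinarith [Real.exp_pos (c * u n),
              mul_le_mul h1' h2' hnn2 (le_trans hnn1 h1')]
        _ = u 0 * μ 1 ^ (n + 1) * Real.exp (c * ∑ i ∈ Finset.range (n + 1), u i) := by
            rw [Finset.sum_range_succ, mul_add, Real.exp_add]; ring
  refine ⟨Real.exp (c * ((1 - α) / (1 - r))), fun j _ => ⟨hlb j, ?_⟩⟩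
  calc u j ≤ u 0 * μ 1 ^ j * Real.exp (c * ∑ i ∈ Finset.range j, u i) := hub j
    _ ≤ u 0 * μ 1 ^ j * Real.exp (c * ((1 - α) / (1 - r))) := by
        apply mul_le_mul_of_nonneg_left _ (by positivity)
        exact Real.exp_le_exp.2 (mul_le_mul_of_nonneg_left (hS j) hc0)
    _ = Real.exp (c * ((1 - α) / (1 - r))) * (u 0 * μ 1 ^ j) := by ring
end

section
/- Let X be a positive-integer-valued random variable with E[X] = ν and E[X^q] = m_q < ∞ for some q ∈ (1,2], and let F(t) := 1 - G(1-t) where G is the generating function of X. Then for all t ∈ [0,1], ν t (1 - C_μ t^{q-1}) ≤ F(t) ≤ ν t, where C_μ = c m_q/ν for a universal constant c depending only on q. -/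
private lemma quad_bound (t : ℝ) (ht0 : 0 ≤ t) (ht1 : t ≤ 1) :
    ∀ k : ℕ, (1 - t) ^ k ≤ 1 - (k : ℝ) * t + ((k : ℝ) * ((k : ℝ) - 1) / 2) * t ^ 2 := by
  intro k
  induction k with
  | zero => norm_num
  | succ n ih =>
    have h1t : (0:ℝ) ≤ 1 - t := by linarith
    have hnn : (0:ℝ) ≤ (n:ℝ) * ((n:ℝ) - 1) := by
      rcases Nat.eq_zero_or_pos n with h | h
      · simp [h]
      · have h1 : (1:ℝ) ≤ (n:ℝ) := by exact_mod_cast h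
        nlinarith
    have h0 : (0:ℝ) ≤ (1 - t) ^ n := pow_nonneg h1t n
    have hrw : (1 - t) ^ (n + 1) = (1 - t) * (1 - t) ^ n := by ring
    rw [hrw]
    push_cast
    nlinarith [mul_le_mul_of_nonneg_left ih h1t, mul_nonneg hnn (mul_nonneg (mul_nonneg ht0 ht0) ht0)]

private lemma key_bound (q : ℝ) (hq1 : 1 < q) (hq2 : q ≤ 2) (t : ℝ) (ht0 : 0 ≤ t) (ht1 : t ≤ 1)
    (k : ℕ) : (k : ℝ) * t - (1 - (1 - t) ^ k) ≤ ((k : ℝ) * t) ^ q := by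
  have hx0 : 0 ≤ (k : ℝ) * t := mul_nonneg (Nat.cast_nonneg k) ht0
  rcases eq_or_lt_of_le hx0 with h0 | h0
  · rcases mul_eq_zero.mp h0.symm with hk | ht
    · have hk0 : k = 0 := by exact_mod_cast hk
      subst hk0
      simp [Real.zero_rpow (by linarith : q ≠ 0)]
    · subst ht
      simp [Real.zero_rpow (by linarith : q ≠ 0)]
  · have h1k : (1 - t) ^ k ≤ 1 := pow_le_one₀ (by linarith) (by linarith)
    rcases le_or_gt ((k : ℝ) * t) 1 with hle | hgt
    · have h2 : ((k : ℝ) * t) ^ (2:ℝ) ≤ ((k : ℝ) * t) ^ q :=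
        Real.rpow_le_rpow_of_exponent_ge h0 hle hq2
      have h2' : ((k : ℝ) * t) ^ (2:ℝ) = ((k : ℝ) * t) ^ (2:ℕ) := by
        rw [← Real.rpow_natCast]; norm_num
      rw [h2'] at h2
      have hq := quad_bound t ht0 ht1 k
      have hknn : (0:ℝ) ≤ (k:ℝ) := Nat.cast_nonneg k
      nlinarith [sq_nonneg t, mul_nonneg hknn (sq_nonneg t)]
    · have h2 : ((k : ℝ) * t) ^ (1:ℝ) ≤ ((k : ℝ) * t) ^ q :=
        Real.rpow_le_rpow_of_exponent_le hgt.le (by linarith)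
      rw [Real.rpow_one] at h2
      linarith

/-- For a positive-integer-valued random variable with pmf `μ`, mean `ν`, finite
`q`-th moment `m_q` for `q ∈ (1,2]`, and `F(t) = 1 - G(1-t)`, there is a universal
constant `c` depending only on `q` such that, with `C_μ = c m_q / ν`,
`ν t (1 - C_μ t^{q-1}) ≤ F(t) ≤ ν t` for all `t ∈ [0,1]`. -/
theorem stmt7 (q : ℝ) (hq1 : 1 < q) (hq2 : q ≤ 2) :
    ∃ c : ℝ, 0 < c ∧
      ∀ (μ : ℕ → ℝ), (∀ k, 0 ≤ μ k) → (∑' k, μ k = 1) → μ 0 = 0 →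
        ∀ ν mq : ℝ, HasSum (fun (k : ℕ) => (k : ℝ) * μ k) ν →
          HasSum (fun (k : ℕ) => (k : ℝ) ^ q * μ k) mq →
          ∀ t ∈ Set.Icc (0 : ℝ) 1,
            ν * t * (1 - (c * mq / ν) * t ^ (q - 1)) ≤ 1 - ∑' k, μ k * (1 - t) ^ k ∧
              1 - ∑' k, μ k * (1 - t) ^ k ≤ ν * t := by
  refine ⟨1, one_pos, ?_⟩
  intro μ hpos htot hμ0 ν mq hν hmq t ht
  obtain ⟨ht0, ht1⟩ := ht
  -- pointwise bound μ k ≤ k * μ k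
  have hble : ∀ k : ℕ, μ k ≤ (k : ℝ) * μ k := by
    intro k
    cases k with
    | zero => simp [hμ0]
    | succ n =>
      have h1 : (1:ℝ) ≤ ((n+1 : ℕ) : ℝ) := by exact_mod_cast Nat.succ_le_succ (Nat.zero_le n)
      nlinarith [hpos (n+1)]
  have hμsum : Summable μ := Summable.of_nonneg_of_le hpos hble hν.summable
  have hμ1 : HasSum μ 1 := hμsum.hasSum_iff.mpr htot
  have hν1 : (1:ℝ) ≤ ν := hasSum_le hble hμ1 hν
  have hνne : ν ≠ 0 := by linarith
  -- summability of the generating-function series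
  have h1t0 : (0:ℝ) ≤ 1 - t := by linarith
  have h1t1 : (1:ℝ) - t ≤ 1 := by linarith
  have hSsummable : Summable (fun k : ℕ => μ k * (1 - t) ^ k) := by
    refine Summable.of_nonneg_of_le (fun k => mul_nonneg (hpos k) (pow_nonneg h1t0 k)) ?_ hμsum
    intro k
    exact mul_le_of_le_one_right (hpos k) (pow_le_one₀ h1t0 h1t1)
  set S := ∑' k, μ k * (1 - t) ^ k with hS
  have hShs : HasSum (fun k : ℕ => μ k * (1 - t) ^ k) S := hSsummable.hasSum
  -- the difference series
  have hdiff : HasSum (fun k : ℕ => (k : ℝ) * μ k * t - (μ k - μ k * (1 - t) ^ k))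
      (ν * t - (1 - S)) := ((hν.mul_right t).sub (hμ1.sub hShs))
  -- upper bound: 1 - S ≤ ν * t
  have hupper : 1 - S ≤ ν * t := by
    have h0 : (0:ℝ) ≤ ν * t - (1 - S) := by
      refine hasSum_le (fun k => ?_) hasSum_zero hdiff
      have hb : 1 - (k : ℝ) * t ≤ (1 - t) ^ k := by
        have := one_add_mul_le_pow (a := -t) (by linarith) k
        rw [← sub_eq_add_neg] at this
        simpa [mul_comm] using this
      nlinarith [hpos k]
    linarith
  refine ⟨?_, hupper⟩
  -- lower bound
  rcases eq_or_lt_of_le ht0 with ht0' | ht0'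
  · -- t = 0
    have hS1 : S = 1 := by
      rw [hS, ← ht0']
      simpa using htot
    rw [← ht0', hS1]
    simp
  · have hgsum : HasSum (fun k : ℕ => (k : ℝ) ^ q * μ k * t ^ q) (mq * t ^ q) :=
      hmq.mul_right (t ^ q)
    have hlow : ν * t - (1 - S) ≤ mq * t ^ q := by
      refine hasSum_le (fun k => ?_) hdiff hgsum
      have hkb := key_bound q hq1 hq2 t ht0 ht1 k
      have hmr : ((k : ℝ) * t) ^ q = (k : ℝ) ^ q * t ^ q :=
        Real.mul_rpow (Nat.cast_nonneg k) ht0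
      rw [hmr] at hkb
      nlinarith [hpos k, mul_le_mul_of_nonneg_left hkb (hpos k)]
    have htq : t * t ^ (q - 1) = t ^ q := by
      have h := (Real.rpow_add ht0' 1 (q - 1)).symm
      rw [Real.rpow_one, show (1:ℝ) + (q - 1) = q by ring] at h
      exact h
    have heq : ν * t * (1 - (1 * mq / ν) * t ^ (q - 1)) = ν * t - mq * t ^ q := by
      field_simp
      rw [← htq]
      ring
    rw [heq]
    linarith
end

section
/- Define the sequence δ_k = 1 - γ̄_k by δ_0 = p and δ_{k+1} = F(δ_k) with ν t (1 - C t^{q-1}) ≤ F(t) ≤ ν t for all t ∈ [0,1], where ν > 1, C > 0, q ∈ (1,2]. Let k₁* = min{k : ∑_{i=0}^k C δ_i^{q-1} > 1/2}. Then for all k ≤ k₁*, (1/2) ν^k p ≤ δ_k ≤ ν^k p, and the upper bound δ_k ≤ ν^k p holds for all k. -/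
/-! Along the orbit each step multiplies `δ` by at most `ν`, giving the upper bound, and by at
least `ν (1 - x_i)` with `x_i = C δ_i^{q-1}`. Hence `δ_k ≥ ν^k p ∏_{i<k} (1 - x_i)`, and before
`k₁*` the Weierstrass product inequality bounds the product below by `1 - ∑_{i<k} x_i ≥ 1/2`. -/

open Finset

theorem Finset.one_sub_sum_le_prod_one_sub {ι R : Type*} [CommRing R] [LinearOrder R]
    [IsStrictOrderedRing R] (s : Finset ι) {x : ι → R} (hx0 : ∀ i ∈ s, 0 ≤ x i)
    (hx1 : ∀ i ∈ s, x i ≤ 1) : 1 - ∑ i ∈ s, x i ≤ ∏ i ∈ s, (1 - x i) := by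
  classical
  induction s using Finset.induction_on with
  | empty => simp
  | insert a s ha ih =>
    have hxa0 := hx0 a (mem_insert_self a s)
    have hxa1 := hx1 a (mem_insert_self a s)
    have hsum : 0 ≤ ∑ i ∈ s, x i := sum_nonneg fun i hi => hx0 i (mem_insert_of_mem hi)
    have ih := ih (fun i hi => hx0 i (mem_insert_of_mem hi))
      fun i hi => hx1 i (mem_insert_of_mem hi)
    rw [sum_insert ha, prod_insert ha]
    calc 1 - (x a + ∑ i ∈ s, x i)
        ≤ (1 - x a) * (1 - ∑ i ∈ s, x i) := by nlinarith [mul_nonneg hxa0 hsum]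
      _ ≤ (1 - x a) * ∏ i ∈ s, (1 - x i) := mul_le_mul_of_nonneg_left ih (sub_nonneg.2 hxa1)

theorem geom_mul_prod_one_sub_le {u x : ℕ → ℝ} {c : ℝ} (hc : 0 ≤ c) (n : ℕ)
    (hx : ∀ k < n, x k ≤ 1) (h : ∀ k < n, c * u k * (1 - x k) ≤ u (k + 1)) :
    c ^ n * u 0 * ∏ k ∈ range n, (1 - x k) ≤ u n := by
  induction n with
  | zero => simp
  | succ n ih =>
    have ih := ih (fun k hk => hx k (by omega)) fun k hk => h k (by omega)
    have hstep : 0 ≤ c * (1 - x n) := mul_nonneg hc (sub_nonneg.2 (hx n n.lt_succ_self))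
    calc c ^ (n + 1) * u 0 * ∏ k ∈ range (n + 1), (1 - x k)
        = c ^ n * u 0 * (∏ k ∈ range n, (1 - x k)) * (c * (1 - x n)) := by
          rw [prod_range_succ]; ring
      _ ≤ u n * (c * (1 - x n)) := mul_le_mul_of_nonneg_right ih hstep
      _ = c * u n * (1 - x n) := by ring
      _ ≤ u (n + 1) := h n n.lt_succ_self

theorem stmt8_general (q C ν p : ℝ) (hC : 0 < C) (hν : 1 < ν)
    (hp : p ∈ Set.Icc (0 : ℝ) 1)
    (F : ℝ → ℝ)
    (hF01 : ∀ t ∈ Set.Icc (0 : ℝ) 1, F t ∈ Set.Icc (0 : ℝ) 1)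
    (hFlow : ∀ t ∈ Set.Icc (0 : ℝ) 1, ν * t * (1 - C * t ^ (q - 1)) ≤ F t)
    (hFup : ∀ t ∈ Set.Icc (0 : ℝ) 1, F t ≤ ν * t)
    (δ : ℕ → ℝ) (hδ0 : δ 0 = p) (hrec : ∀ k, δ (k + 1) = F (δ k))
    (k1 : ℕ)
    (hk1min : ∀ k < k1, ∑ i ∈ Finset.range (k + 1), C * δ i ^ (q - 1) ≤ 1 / 2) :
    (∀ k ≤ k1, (1 / 2) * ν ^ k * p ≤ δ k) ∧ ∀ k, δ k ≤ ν ^ k * p := by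
  have hmem : ∀ k, δ k ∈ Set.Icc (0 : ℝ) 1 := by
    intro k
    induction k with
    | zero => rwa [hδ0]
    | succ k ih => rw [hrec]; exact hF01 _ ih
  have hν0 : 0 ≤ ν := by linarith
  have hx0 : ∀ i, 0 ≤ C * δ i ^ (q - 1) :=
    fun i => mul_nonneg hC.le (Real.rpow_nonneg (hmem i).1 _)
  refine ⟨fun k hk => ?_, fun k => ?_⟩
  · have hsum : ∑ i ∈ range k, C * δ i ^ (q - 1) ≤ 1 / 2 := by
      cases k with
      | zero => simp
      | succ m => exact hk1min m hk
    have hx1 : ∀ i ∈ range k, C * δ i ^ (q - 1) ≤ 1 :=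
      fun i hi => (single_le_sum (fun j _ => hx0 j) hi).trans (hsum.trans (by norm_num))
    have hprod := (range k).one_sub_sum_le_prod_one_sub (fun i _ => hx0 i) hx1
    have hgeom := geom_mul_prod_one_sub_le hν0 k (fun i hi => hx1 i (mem_range.2 hi))
      fun i _ => (hFlow _ (hmem i)).trans_eq (hrec i).symm
    have hνp : 0 ≤ ν ^ k * p := mul_nonneg (pow_nonneg hν0 k) hp.1
    calc 1 / 2 * ν ^ k * p
        ≤ ν ^ k * p * (1 - ∑ i ∈ range k, C * δ i ^ (q - 1)) := by nlinarith
      _ ≤ ν ^ k * p * ∏ i ∈ range k, (1 - C * δ i ^ (q - 1)) :=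
          mul_le_mul_of_nonneg_left hprod hνp
      _ ≤ δ k := by rwa [hδ0] at hgeom
  · simpa [hδ0] using le_geom hν0 k fun i _ => (hrec i).trans_le (hFup _ (hmem i))

/-- Let `δ_0 = p`, `δ_{k+1} = F(δ_k)` where `F : [0,1] → [0,1]` satisfies
`ν t (1 - C t^{q-1}) ≤ F(t) ≤ ν t`, with `ν > 1`, `C > 0`, `q ∈ (1,2]`.
With `k₁* = min{k : ∑_{i=0}^k C δ_i^{q-1} > 1/2}`, we have
`(1/2) ν^k p ≤ δ_k ≤ ν^k p` for all `k ≤ k₁*`, and `δ_k ≤ ν^k p` for all `k`. -/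
theorem stmt8 (q C ν p : ℝ) (hq1 : 1 < q) (hq2 : q ≤ 2) (hC : 0 < C) (hν : 1 < ν)
    (hp : p ∈ Set.Icc (0 : ℝ) 1)
    (F : ℝ → ℝ)
    (hF01 : ∀ t ∈ Set.Icc (0 : ℝ) 1, F t ∈ Set.Icc (0 : ℝ) 1)
    (hFlow : ∀ t ∈ Set.Icc (0 : ℝ) 1, ν * t * (1 - C * t ^ (q - 1)) ≤ F t)
    (hFup : ∀ t ∈ Set.Icc (0 : ℝ) 1, F t ≤ ν * t)
    (δ : ℕ → ℝ) (hδ0 : δ 0 = p) (hrec : ∀ k, δ (k + 1) = F (δ k))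
    (k1 : ℕ)
    (hk1 : 1 / 2 < ∑ i ∈ Finset.range (k1 + 1), C * δ i ^ (q - 1))
    (hk1min : ∀ k < k1, ∑ i ∈ Finset.range (k + 1), C * δ i ^ (q - 1) ≤ 1 / 2) :
    (∀ k ≤ k1, (1 / 2) * ν ^ k * p ≤ δ k) ∧ ∀ k, δ k ≤ ν ^ k * p :=
  stmt8_general q C ν p hC hν hp F hF01 hFlow hFup δ hδ0 hrec k1 hk1min
end

section
/- Let X be a positive-integer-valued random variable with mean ν, 0 ≤ γ' < 1, γ = G(γ') with G the generating function of X, and let X* ~ Bin(X,1-γ') conditioned on being positive. Then the total variation distance between the law of X* and the law of X is at most ν γ' / (1 - γ'). -/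
/-!
Thinning `X` with retention probability `1 - γ'` keeps all `k` points of `{X = k}` with probability
`(1 - γ')^k`, so `m k = μ k (1 - γ')^k` lies below the law of `X` and below the law of the thinned
variable; conditioning on positivity only enlarges the latter off `0`, where `m` vanishes. A common
minorant `m` of two laws bounds their total variation distance by `1 - ∑ m`, and Bernoulli's
inequality `(1 - γ')^k ≥ 1 - k γ'` gives `1 - ∑ m ≤ ν γ' ≤ ν γ' / (1 - γ')`.
-/

open Finset

theorem half_tsum_abs_sub_le_one_sub_tsum {ι : Type*} {p q m : ι → ℝ} (hp : HasSum p 1)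
    (hq : HasSum q 1) (hm : Summable m) (hmp : ∀ i, m i ≤ p i) (hmq : ∀ i, m i ≤ q i) :
    (1 / 2) * ∑' i, |p i - q i| ≤ 1 - ∑' i, m i := by
  have hbound : ∀ i, |p i - q i| ≤ p i + q i - 2 * m i := fun i =>
    abs_sub_le_iff.mpr ⟨by linarith [hmq i], by linarith [hmp i]⟩
  have hmajorant : HasSum (fun i => p i + q i - 2 * m i) (1 + 1 - 2 * ∑' i, m i) :=
    (hp.add hq).sub (hm.hasSum.mul_left 2)
  have := hasSum_le hbound (hmajorant.summable.of_nonneg_of_le (fun i => abs_nonneg _)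
    hbound).hasSum hmajorant
  linarith

theorem hasSum_ite_zero_div_one_sub {b : ℕ → ℝ} (hb : HasSum b 1) (hb0 : b 0 < 1) :
    HasSum (fun k => if k = 0 then 0 else b k / (1 - b 0)) 1 := by
  have h := (hasSum_ite_sub_hasSum hb 0).div_const (1 - b 0)
  rw [div_self (sub_ne_zero.mpr hb0.ne')] at h
  simpa only [ite_div, zero_div] using h

/-- The mass `P(X = d, X* = k)` of binomial thinning of `X ~ μ` with retention probability
`1 - s`. -/
def thinnedMass (μ : ℕ → ℝ) (s : ℝ) (d k : ℕ) : ℝ :=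
  μ d * (d.choose k : ℝ) * (1 - s) ^ k * s ^ (d - k)

section thinnedMass

variable {μ : ℕ → ℝ} {s : ℝ}

theorem thinnedMass_nonneg (hμ : ∀ d, 0 ≤ μ d) (hs0 : 0 ≤ s) (hs1 : s ≤ 1) (d k : ℕ) :
    0 ≤ thinnedMass μ s d k := by
  unfold thinnedMass
  have := hμ d
  have : 0 ≤ 1 - s := by linarith
  positivity

theorem thinnedMass_eq_zero_of_lt {d k : ℕ} (h : d < k) : thinnedMass μ s d k = 0 := by
  simp [thinnedMass, Nat.choose_eq_zero_of_lt h]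

theorem thinnedMass_self (k : ℕ) : thinnedMass μ s k k = μ k * (1 - s) ^ k := by
  simp [thinnedMass]

theorem thinnedMass_zero_right (d : ℕ) : thinnedMass μ s d 0 = μ d * s ^ d := by
  simp [thinnedMass]

theorem hasSum_thinnedMass (d : ℕ) : HasSum (thinnedMass μ s d) (μ d) := by
  have h : HasSum (thinnedMass μ s d) (∑ k ∈ range (d + 1), thinnedMass μ s d k) :=
    hasSum_sum_of_ne_finset_zero fun k hk => thinnedMass_eq_zero_of_lt (by simpa using hk)
  convert h using 1
  have hbinomial : ∑ k ∈ range (d + 1), (d.choose k : ℝ) * ((1 - s) ^ k * s ^ (d - k)) = 1 := by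
    simp_rw [mul_comm (d.choose _ : ℝ), ← add_pow, sub_add_cancel, one_pow]
  simp_rw [thinnedMass, mul_assoc, ← mul_sum, hbinomial, mul_one]

theorem summable_uncurry_thinnedMass (hμ : ∀ d, 0 ≤ μ d) (hμs : Summable μ) (hs0 : 0 ≤ s)
    (hs1 : s ≤ 1) : Summable (Function.uncurry (thinnedMass μ s)) :=
  (summable_prod_of_nonneg fun p => thinnedMass_nonneg hμ hs0 hs1 p.1 p.2).mpr
    ⟨fun d => (hasSum_thinnedMass d).summable,
      by simpa only [(hasSum_thinnedMass _).tsum_eq] using hμs⟩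

theorem summable_thinnedMass_column (hμ : ∀ d, 0 ≤ μ d) (hμs : Summable μ) (hs0 : 0 ≤ s)
    (hs1 : s ≤ 1) (k : ℕ) : Summable fun d => thinnedMass μ s d k :=
  ((Equiv.prodComm ℕ ℕ).summable_iff.mpr
    (summable_uncurry_thinnedMass hμ hμs hs0 hs1)).prod_factor k

theorem hasSum_thinnedMass_marginal (hμ : ∀ d, 0 ≤ μ d) (hμs : Summable μ) (hs0 : 0 ≤ s)
    (hs1 : s ≤ 1) : HasSum (fun k => ∑' d, thinnedMass μ s d k) (∑' d, μ d) := by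
  have hswap := (Equiv.prodComm ℕ ℕ).summable_iff.mpr
    (summable_uncurry_thinnedMass hμ hμs hs0 hs1)
  have hcols : Summable fun k => ∑' d, thinnedMass μ s d k :=
    ((summable_prod_of_nonneg fun p => thinnedMass_nonneg hμ hs0 hs1 p.2 p.1).mp hswap).2
  convert hcols.hasSum using 1
  rw [(summable_uncurry_thinnedMass hμ hμs hs0 hs1).tsum_comm]
  exact tsum_congr fun d => (hasSum_thinnedMass d).tsum_eq.symm

theorem mul_pow_le_tsum_thinnedMass (hμ : ∀ d, 0 ≤ μ d) (hμs : Summable μ) (hs0 : 0 ≤ s)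
    (hs1 : s ≤ 1) (k : ℕ) : μ k * (1 - s) ^ k ≤ ∑' d, thinnedMass μ s d k :=
  thinnedMass_self (μ := μ) (s := s) k ▸
    (summable_thinnedMass_column hμ hμs hs0 hs1 k).le_tsum k fun d _ =>
      thinnedMass_nonneg hμ hs0 hs1 d k

end thinnedMass

theorem tsum_mul_pow_le_of_apply_zero {μ : ℕ → ℝ} {s : ℝ} (hμ : ∀ d, 0 ≤ μ d) (hμ1 : HasSum μ 1)
    (hμ0 : μ 0 = 0) (hs0 : 0 ≤ s) (hs1 : s ≤ 1) : ∑' d, μ d * s ^ d ≤ s := by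
  have hle : ∀ d, μ d * s ^ d ≤ μ d * s := by
    rintro (_ | d)
    · simp [hμ0]
    · exact mul_le_mul_of_nonneg_left (pow_le_of_le_one hs0 hs1 d.succ_ne_zero) (hμ _)
  have hsum : Summable fun d => μ d * s ^ d :=
    (hμ1.summable.mul_right s).of_nonneg_of_le (fun d => by have := hμ d; positivity) hle
  simpa using hasSum_le hle hsum.hasSum (hμ1.mul_right s)

theorem one_sub_mul_le_tsum_mul_one_sub_pow {μ : ℕ → ℝ} {ν s : ℝ} (hμ : ∀ d, 0 ≤ μ d)
    (hμ1 : HasSum μ 1) (hν : HasSum (fun k : ℕ => (k : ℝ) * μ k) ν) (hs0 : 0 ≤ s) (hs1 : s ≤ 1) :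
    1 - s * ν ≤ ∑' k, μ k * (1 - s) ^ k := by
  have hbernoulli : ∀ k : ℕ, μ k - s * (k * μ k) ≤ μ k * (1 - s) ^ k := fun k => by
    have := one_add_mul_le_pow (show (-2 : ℝ) ≤ -s by linarith) k
    rw [← sub_eq_add_neg] at this
    nlinarith [hμ k]
  have hsum : Summable fun k => μ k * (1 - s) ^ k :=
    hμ1.summable.of_nonneg_of_le (fun k => mul_nonneg (hμ k) (pow_nonneg (by linarith) k))
      fun k => mul_le_of_le_one_right (hμ k) (pow_le_one₀ (by linarith) (by linarith))
  exact hasSum_le hbernoulli (hμ1.sub (hν.mul_left s)) hsum.hasSum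

/-- Let `X` be positive-integer-valued with pmf `μ` and mean `ν`, `0 ≤ γ' < 1`,
`γ = G(γ')`, and let `X*` be the zero-truncated mixed binomial `Bin(X,1-γ')`
conditioned on positivity. Then the total variation distance between the law of
`X*` and the law of `X` is at most `ν γ' / (1-γ')`. -/
theorem stmt11 (μ : ℕ → ℝ) (hμnn : ∀ k, 0 ≤ μ k) (hμsum : ∑' k, μ k = 1)
    (hμ0 : μ 0 = 0)
    (ν : ℝ) (hν : HasSum (fun (k : ℕ) => (k : ℝ) * μ k) ν)
    (γ' γ : ℝ) (hγ'nn : 0 ≤ γ') (hγ'lt : γ' < 1)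
    (hγ : γ = ∑' d, μ d * γ' ^ d)
    (b : ℕ → ℝ)
    (hb : ∀ k, b k = ∑' d, μ d * (Nat.choose d k : ℝ) * (1 - γ') ^ k * γ' ^ (d - k)) :
    (1 / 2) * ∑' k : ℕ, |(if k = 0 then (0 : ℝ) else b k / (1 - γ)) - μ k|
      ≤ ν * γ' / (1 - γ') := by
  have hμs : Summable μ := by
    by_contra h
    simp [tsum_eq_zero_of_not_summable h] at hμsum
  have hμ1 : HasSum μ 1 := hμsum ▸ hμs.hasSum
  have hb' : b = fun k => ∑' d, thinnedMass μ γ' d k := funext hb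
  have hb1 : HasSum b 1 := hb' ▸ hμsum ▸ hasSum_thinnedMass_marginal hμnn hμs hγ'nn hγ'lt.le
  have hb0 : b 0 = γ := by simp [hb', thinnedMass_zero_right, hγ]
  have hγ1 : γ < 1 :=
    (hγ ▸ tsum_mul_pow_le_of_apply_zero hμnn hμ1 hμ0 hγ'nn hγ'lt.le).trans_lt hγ'lt
  have hbnn : ∀ k, 0 ≤ b k := fun k => hb' ▸ tsum_nonneg fun d =>
    thinnedMass_nonneg hμnn hγ'nn hγ'lt.le d k
  have hγnn : 0 ≤ γ := hb0 ▸ hbnn 0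
  have hm_le_b : ∀ k, μ k * (1 - γ') ^ k ≤ b k := fun k =>
    hb' ▸ mul_pow_le_tsum_thinnedMass hμnn hμs hγ'nn hγ'lt.le k
  have hm_le_truncated : ∀ k, μ k * (1 - γ') ^ k ≤ if k = 0 then 0 else b k / (1 - γ) := by
    rintro (_ | k)
    · simp [hμ0]
    · exact (hm_le_b _).trans (le_div_self (hbnn _) (by linarith) (by linarith))
  have hm_le_μ : ∀ k, μ k * (1 - γ') ^ k ≤ μ k := fun k =>
    mul_le_of_le_one_right (hμnn k) (pow_le_one₀ (by linarith) (by linarith))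
  calc _ ≤ 1 - ∑' k, μ k * (1 - γ') ^ k :=
        half_tsum_abs_sub_le_one_sub_tsum (hb0 ▸ hasSum_ite_zero_div_one_sub hb1 (hb0 ▸ hγ1)) hμ1
          (hμs.of_nonneg_of_le (fun k => mul_nonneg (hμnn k) (pow_nonneg (by linarith) k)) hm_le_μ)
          hm_le_truncated hm_le_μ
    _ ≤ γ' * ν := by linarith [one_sub_mul_le_tsum_mul_one_sub_pow hμnn hμ1 hν hγ'nn hγ'lt.le]
    _ ≤ ν * γ' / (1 - γ') := by
        rw [mul_comm, le_div_iff₀ (by linarith)]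
        nlinarith [mul_nonneg (hν.nonneg fun k => mul_nonneg k.cast_nonneg (hμnn k)) hγ'nn]
end

section
/- (Neveu's inequality) Let q ∈ (1,2] and let ξ₁,...,ξ_ℓ be nonnegative independent random variables with finite q-th moments. Define the q-variance V_q(ξ) = E[ξ^q] - E[ξ]^q. Then V_q(∑_{i=1}^ℓ ξ_i) ≤ ∑_{i=1}^ℓ V_q(ξ_i). -/
open MeasureTheory ProbabilityTheory

section NeveuAux
variable {Ω : Type} [MeasurableSpace Ω] {P : Measure Ω}

/-- For `0 < p ≤ 1` and `s ≥ 0`, the map `u ↦ (u+s)^p - u^p` is antitone on `[0,∞)`. -/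
lemma neveu_antitone_diff {p s : ℝ} (hp0 : 0 < p) (hp1 : p ≤ 1) (hs : 0 ≤ s) :
    AntitoneOn (fun u : ℝ => (u + s) ^ p - u ^ p) (Set.Ici 0) := by
  apply antitoneOn_of_deriv_nonpos (convex_Ici 0)
  · exact (((Real.continuous_rpow_const hp0.le).comp
      (continuous_id.add continuous_const)).sub
      (Real.continuous_rpow_const hp0.le)).continuousOn
  · intro u hu
    rw [interior_Ici] at hu
    have h1 : HasDerivAt (fun u : ℝ => (u + s) ^ p) (p * (u + s) ^ (p - 1)) u := by
      have h0 : u + s ≠ 0 := by have := hu.out; positivity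
      have := (Real.hasDerivAt_rpow_const (x := u + s) (p := p) (Or.inl h0)).comp u
        ((hasDerivAt_id u).add_const s)
      simpa [Function.comp_def] using this
    have h2 : HasDerivAt (fun u : ℝ => u ^ p) (p * u ^ (p - 1)) u :=
      Real.hasDerivAt_rpow_const (Or.inl (ne_of_gt hu.out))
    exact (h1.sub h2).differentiableAt.differentiableWithinAt
  · intro u hu
    rw [interior_Ici] at hu
    have hu0 : (0:ℝ) < u := hu.out
    have h0 : u + s ≠ 0 := by positivity
    have h1 : HasDerivAt (fun u : ℝ => (u + s) ^ p) (p * (u + s) ^ (p - 1)) u := by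
      have := (Real.hasDerivAt_rpow_const (x := u + s) (p := p) (Or.inl h0)).comp u
        ((hasDerivAt_id u).add_const s)
      simpa [Function.comp_def] using this
    have h2 : HasDerivAt (fun u : ℝ => u ^ p) (p * u ^ (p - 1)) u :=
      Real.hasDerivAt_rpow_const (Or.inl (ne_of_gt hu0))
    rw [show deriv (fun u : ℝ => (u + s) ^ p - u ^ p) u = _ from (h1.sub h2).deriv]
    have hle : (u + s) ^ (p - 1) ≤ u ^ (p - 1) :=
      Real.rpow_le_rpow_of_nonpos hu0 (by linarith) (by linarith)
    nlinarith

/-- Tangent-line inequality for the concave function `t ↦ (t+s)^q - t^q`. -/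
lemma neveu_tangent {q s a b : ℝ} (hq1 : 1 < q) (hq2 : q ≤ 2)
    (hs : 0 ≤ s) (ha : 0 ≤ a) (hb : 0 ≤ b) :
    (b + s) ^ q - b ^ q
      ≤ (a + s) ^ q - a ^ q + q * ((a + s) ^ (q - 1) - a ^ (q - 1)) * (b - a) := by
  have hq0 : (0:ℝ) < q := by linarith
  set D : ℝ → ℝ := fun u => (u + s) ^ (q - 1) - u ^ (q - 1) with hD
  have hDanti : AntitoneOn D (Set.Ici 0) := neveu_antitone_diff (by linarith) (by linarith) hs
  set H : ℝ → ℝ := fun t =>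
    (a + s) ^ q - a ^ q + q * D a * (t - a) - ((t + s) ^ q - t ^ q) with hH
  have hderiv : ∀ t : ℝ, 0 ≤ t → HasDerivAt H (q * D a - q * D t) t := by
    intro t ht
    have h1 : HasDerivAt (fun t : ℝ => (t + s) ^ q) (q * (t + s) ^ (q - 1)) t := by
      have := (Real.hasDerivAt_rpow_const (x := t + s) (p := q) (Or.inr hq1.le)).comp t
        ((hasDerivAt_id t).add_const s)
      simpa [Function.comp_def] using this
    have h2 : HasDerivAt (fun t : ℝ => t ^ q) (q * t ^ (q - 1)) t :=
      Real.hasDerivAt_rpow_const (Or.inr hq1.le)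
    have h3 : HasDerivAt (fun t : ℝ => (a + s) ^ q - a ^ q + q * D a * (t - a)) (q * D a) t := by
      simpa using (((hasDerivAt_id t).sub_const a).const_mul (q * D a)).const_add
        ((a + s) ^ q - a ^ q)
    have := h3.sub (h1.sub h2)
    have heq : q * D a - (q * (t + s) ^ (q - 1) - q * t ^ (q - 1)) = q * D a - q * D t := by
      simp [hD]; ring
    rw [heq] at this
    exact this
  have hHa : H a = 0 := by simp [hH]
  have hcont : ContinuousOn H (Set.Ici 0) := by
    intro t ht
    exact ((hderiv t ht).continuousAt).continuousWithinAt
  rcases le_total a b with hab | hab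
  · -- b ≥ a : H monotone on [a, ∞)
    have hmono : MonotoneOn H (Set.Ici a) := by
      apply monotoneOn_of_deriv_nonneg (convex_Ici a)
      · exact fun t ht => (hcont t (le_trans ha ht.out)).mono (Set.Ici_subset_Ici.2 ha)
      · intro t ht
        rw [interior_Ici] at ht
        exact (hderiv t (le_trans ha ht.out.le)).differentiableAt.differentiableWithinAt
      · intro t ht
        rw [interior_Ici] at ht
        rw [(hderiv t (le_trans ha ht.out.le)).deriv]
        have : D t ≤ D a := hDanti ha (le_trans ha ht.out.le) ht.out.le
        nlinarith
    have := hmono (Set.self_mem_Ici) hab hab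
    rw [hHa] at this
    simp only [hH, hD] at this
    linarith
  · -- b ≤ a : H antitone on [0, a]
    have hanti : AntitoneOn H (Set.Icc 0 a) := by
      apply antitoneOn_of_deriv_nonpos (convex_Icc 0 a)
      · exact hcont.mono (Set.Icc_subset_Ici_self)
      · intro t ht
        rw [interior_Icc] at ht
        exact (hderiv t ht.1.le).differentiableAt.differentiableWithinAt
      · intro t ht
        rw [interior_Icc] at ht
        rw [(hderiv t ht.1.le).deriv]
        have : D a ≤ D t := hDanti ht.1.le ha ht.2.le
        nlinarith
    have := hanti (Set.mem_Icc.2 ⟨hb, hab⟩) (Set.mem_Icc.2 ⟨ha, le_refl a⟩) hab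
    rw [hHa] at this
    simp only [hH, hD] at this
    linarith




/-- Integrability of a small power. -/
lemma neveu_integrable_rpow_le_one {r : ℝ} (hr0 : 0 ≤ r) (hr1 : r ≤ 1) {X : Ω → ℝ}
    (hX : Measurable X) (hnn : ∀ ω, 0 ≤ X ω) (hXi : Integrable X P) [IsFiniteMeasure P] :
    Integrable (fun ω => X ω ^ r) P := by
  refine ((integrable_const (1:ℝ)).add hXi).mono
    (((Real.continuous_rpow_const hr0).measurable.comp hX).aestronglyMeasurable) (ae_of_all _ fun ω => ?_)
  have h1 : 0 ≤ X ω ^ r := Real.rpow_nonneg (hnn ω) r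
  have h2 : X ω ^ r ≤ 1 + X ω := by
    rcases le_total (X ω) 1 with h | h
    · have := Real.rpow_le_one (hnn ω) h hr0
      linarith [hnn ω]
    · have := Real.rpow_le_rpow_of_exponent_le h hr1
      rw [Real.rpow_one] at this
      linarith
  rw [Real.norm_eq_abs, abs_of_nonneg h1, Real.norm_eq_abs]
  exact h2.trans (le_abs_self _)

/-- Jensen: for 0 < r ≤ 1 and nonnegative integrable X, `∫ X^r ≤ (∫ X)^r`. -/
lemma neveu_jensen {r : ℝ} (hr0 : 0 ≤ r) (hr1 : r ≤ 1) {X : Ω → ℝ}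
    (hX : Measurable X) (hnn : ∀ ω, 0 ≤ X ω) (hXi : Integrable X P)
    [IsProbabilityMeasure P] :
    ∫ ω, X ω ^ r ∂P ≤ (∫ ω, X ω ∂P) ^ r := by
  have hconc : ConcaveOn ℝ (Set.Ici 0) (fun t : ℝ => t ^ r) := Real.concaveOn_rpow hr0 hr1
  have hcont : ContinuousOn (fun t : ℝ => t ^ r) (Set.Ici 0) :=
    (Real.continuous_rpow_const hr0).continuousOn
  exact hconc.le_map_integral hcont isClosed_Ici (ae_of_all _ hnn) hXi
    (neveu_integrable_rpow_le_one hr0 hr1 hX hnn hXi)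

/-- Integrability of `(X+Y)^q`. -/
lemma neveu_integrable_add_rpow {q : ℝ} (hq : 0 ≤ q) {X Y : Ω → ℝ}
    (hX : Measurable X) (hY : Measurable Y) (hXnn : ∀ ω, 0 ≤ X ω) (hYnn : ∀ ω, 0 ≤ Y ω)
    (hXq : Integrable (fun ω => X ω ^ q) P) (hYq : Integrable (fun ω => Y ω ^ q) P) :
    Integrable (fun ω => (X ω + Y ω) ^ q) P := by
  refine ((hXq.const_mul ((2:ℝ)^q)).add (hYq.const_mul ((2:ℝ)^q))).mono
    (((Real.continuous_rpow_const hq).measurable.comp (hX.add hY)).aestronglyMeasurable) (ae_of_all _ fun ω => ?_)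
  set x := X ω; set y := Y ω
  have hx := hXnn ω; have hy := hYnn ω
  have h1 : 0 ≤ (x + y) ^ q := Real.rpow_nonneg (by linarith) q
  have h2 : (x + y) ^ q ≤ 2^q * x^q + 2^q * y^q := by
    have hm : x + y ≤ 2 * max x y := by
      rcases le_total x y with h | h
      · simp [max_eq_right h]; linarith
      · simp [max_eq_left h]; linarith
    have h3 : (x + y) ^ q ≤ (2 * max x y) ^ q :=
      Real.rpow_le_rpow (by linarith) hm hq
    have h4 : (2 * max x y : ℝ) ^ q = 2^q * (max x y)^q :=
      Real.mul_rpow (by norm_num) (le_max_of_le_left hx)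
    have h5 : (max x y) ^ q ≤ x^q + y^q := by
      rcases le_total x y with h | h
      · rw [max_eq_right h]; nlinarith [Real.rpow_nonneg hx q]
      · rw [max_eq_left h]; nlinarith [Real.rpow_nonneg hy q]
    have h2q : (0:ℝ) ≤ 2^q := Real.rpow_nonneg (by norm_num) q
    calc (x + y) ^ q ≤ 2^q * (max x y)^q := by rw [← h4]; exact h3
      _ ≤ 2^q * (x^q + y^q) := by nlinarith
      _ = 2^q * x^q + 2^q * y^q := by ring
  rw [Real.norm_eq_abs, abs_of_nonneg h1, Real.norm_eq_abs]
  exact h2.trans (le_abs_self _)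




/-- Two-variable Neveu step. -/
lemma neveu_step [IsProbabilityMeasure P] {q : ℝ} (hq1 : 1 < q) (hq2 : q ≤ 2) {X Y : Ω → ℝ}
    (hXm : Measurable X) (hYm : Measurable Y)
    (hXnn : ∀ ω, 0 ≤ X ω) (hYnn : ∀ ω, 0 ≤ Y ω)
    (hXi : Integrable X P) (hYi : Integrable Y P)
    (hXq : Integrable (fun ω => X ω ^ q) P) (hYq : Integrable (fun ω => Y ω ^ q) P)
    (hind : IndepFun X Y P) :
    (∫ ω, (X ω + Y ω) ^ q ∂P) - (∫ ω, (X ω + Y ω) ∂P) ^ q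
      ≤ ((∫ ω, X ω ^ q ∂P) - (∫ ω, X ω ∂P) ^ q)
        + ((∫ ω, Y ω ^ q ∂P) - (∫ ω, Y ω ∂P) ^ q) := by
  have hq0 : (0:ℝ) < q := by linarith
  have hr0 : (0:ℝ) ≤ q - 1 := by linarith
  have hr1 : q - 1 ≤ 1 := by linarith
  set A := ∫ ω, X ω ∂P with hA'
  set B := ∫ ω, Y ω ∂P with hB'
  have hA : 0 ≤ A := integral_nonneg hXnn
  have hB : 0 ≤ B := integral_nonneg hYnn
  have hsum : ∫ ω, (X ω + Y ω) ∂P = A + B := integral_add hXi hYi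
  -- cross functions
  set F : Ω → ℝ := fun ω => (X ω + B) ^ (q-1) - B ^ (q-1) with hF
  set G : Ω → ℝ := fun ω => Y ω - B with hG
  have hφm : Measurable (fun x : ℝ => (x + B) ^ (q-1) - B ^ (q-1)) :=
    (((Real.continuous_rpow_const hr0).comp (continuous_id.add continuous_const)).sub
      continuous_const).measurable
  have hψm : Measurable (fun y : ℝ => y - B) := (continuous_id.sub continuous_const).measurable
  have hFm : Measurable F := hφm.comp hXm
  have hGm : Measurable G := hψm.comp hYm
  have hFG : IndepFun F G P := hind.comp hφm hψm
  have hXBi : Integrable (fun ω => X ω + B) P := by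
    have := hXi.add (integrable_const B)
    exact this
  have hXBq1 : Integrable (fun ω => (X ω + B) ^ (q-1)) P :=
    neveu_integrable_rpow_le_one hr0 hr1 (hXm.add_const B)
      (fun ω => add_nonneg (hXnn ω) hB) hXBi
  have hFi : Integrable F P := hXBq1.sub (integrable_const _)
  have hGi : Integrable G P := hYi.sub (integrable_const _)
  have hFGi : Integrable (fun ω => F ω * G ω) P := hFG.integrable_mul hFi hGi
  have hGint : ∫ ω, G ω ∂P = 0 := by
    simp only [hG]
    rw [integral_sub hYi (integrable_const B)]
    simp [← hB']
  have hcross : ∫ ω, F ω * G ω ∂P = 0 := by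
    have h := hFG.integral_mul_eq_mul_integral hFm.aestronglyMeasurable hGm.aestronglyMeasurable
    have h' : ∫ ω, F ω * G ω ∂P = integral P F * integral P G := h
    rw [h', hGint, mul_zero]
  have hXYq_int : Integrable (fun ω => (X ω + Y ω) ^ q) P :=
    neveu_integrable_add_rpow hq0.le hXm hYm hXnn hYnn hXq hYq
  have hBq_int : Integrable (fun _ : Ω => (B:ℝ) ^ q) P := integrable_const _
  have hXBq : Integrable (fun ω => (X ω + B) ^ q) P :=
    neveu_integrable_add_rpow hq0.le hXm measurable_const hXnn (fun _ => hB) hXq hBq_int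
  -- Part 1
  have h1 : (∫ ω, (X ω + Y ω) ^ q ∂P)
      ≤ (∫ ω, (X ω + B) ^ q ∂P) + (∫ ω, Y ω ^ q ∂P) - B ^ q := by
    have hpt : ∀ ω, (X ω + Y ω) ^ q
        ≤ (X ω + B) ^ q + Y ω ^ q - B ^ q + q * (F ω * G ω) := by
      intro ω
      have h := neveu_tangent (s := X ω) (a := B) (b := Y ω) hq1 hq2 (hXnn ω) hB (hYnn ω)
      rw [add_comm (Y ω) (X ω), add_comm B (X ω)] at h
      simp only [hF, hG]
      nlinarith [h]
    have hRint : Integrable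
        (fun ω => (X ω + B) ^ q + Y ω ^ q - B ^ q + q * (F ω * G ω)) P :=
      (((hXBq.add hYq).sub (integrable_const _)).add (hFGi.const_mul q))
    calc (∫ ω, (X ω + Y ω) ^ q ∂P)
        ≤ ∫ ω, ((X ω + B) ^ q + Y ω ^ q - B ^ q + q * (F ω * G ω)) ∂P :=
          integral_mono hXYq_int hRint hpt
      _ = (∫ ω, (X ω + B) ^ q ∂P) + (∫ ω, Y ω ^ q ∂P) - B ^ q := by
          have hI1 : Integrable (fun ω => (X ω + B) ^ q + Y ω ^ q - B ^ q) P :=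
            (hXBq.add hYq).sub (integrable_const _)
          have hI2 : Integrable (fun ω => (X ω + B) ^ q + Y ω ^ q) P := hXBq.add hYq
          rw [integral_add hI1 (hFGi.const_mul q),
            integral_sub hI2 (integrable_const _),
            integral_add hXBq hYq, integral_const_mul, hcross, integral_const]
          simp
  -- Part 2
  have h2 : (∫ ω, (X ω + B) ^ q ∂P) ≤ (∫ ω, X ω ^ q ∂P) + (A + B) ^ q - A ^ q := by
    have hpt : ∀ ω, (X ω + B) ^ q
        ≤ X ω ^ q + ((A + B) ^ q - A ^ q)
          + (q * ((A + B) ^ (q-1) - A ^ (q-1))) * (X ω - A) := by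
      intro ω
      have h := neveu_tangent (s := B) (a := A) (b := X ω) hq1 hq2 hB hA (hXnn ω)
      nlinarith [h]
    have hRint : Integrable (fun ω => X ω ^ q + ((A + B) ^ q - A ^ q)
          + (q * ((A + B) ^ (q-1) - A ^ (q-1))) * (X ω - A)) P :=
      (hXq.add (integrable_const _)).add ((hXi.sub (integrable_const A)).const_mul _)
    calc (∫ ω, (X ω + B) ^ q ∂P)
        ≤ ∫ ω, (X ω ^ q + ((A + B) ^ q - A ^ q)
            + (q * ((A + B) ^ (q-1) - A ^ (q-1))) * (X ω - A)) ∂P :=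
          integral_mono hXBq hRint hpt
      _ = (∫ ω, X ω ^ q ∂P) + (A + B) ^ q - A ^ q := by
          have hI3 : Integrable (fun ω => X ω ^ q + ((A + B) ^ q - A ^ q)) P :=
            hXq.add (integrable_const _)
          have hI4 : Integrable (fun ω => X ω - A) P := hXi.sub (integrable_const _)
          rw [integral_add hI3 (hI4.const_mul _),
            integral_add hXq (integrable_const _), integral_const_mul,
            integral_sub hXi (integrable_const A), integral_const]
          simp [← hA']
          ring
  rw [hsum]
  linarith [h1, h2]

end NeveuAux



/-- Neveu's inequality: for `q ∈ (1,2]` and nonnegative independent random variables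
`ξ₁,…,ξ_ℓ` with finite `q`-th moments, the `q`-variance
`V_q(ξ) = E[ξ^q] - E[ξ]^q` is subadditive: `V_q(∑ ξᵢ) ≤ ∑ V_q(ξᵢ)`. -/
theorem stmt13 {Ω : Type} [MeasurableSpace Ω] (P : Measure Ω) [IsProbabilityMeasure P]
    (q : ℝ) (hq1 : 1 < q) (hq2 : q ≤ 2)
    (ℓ : ℕ) (ξ : Fin ℓ → Ω → ℝ)
    (hmeas : ∀ i, Measurable (ξ i))
    (hnn : ∀ i ω, 0 ≤ ξ i ω)
    (hint1 : ∀ i, Integrable (ξ i) P)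
    (hintq : ∀ i, Integrable (fun ω => ξ i ω ^ q) P)
    (hind : iIndepFun ξ P) :
    (∫ ω, (∑ i, ξ i ω) ^ q ∂P) - (∫ ω, (∑ i, ξ i ω) ∂P) ^ q
      ≤ ∑ i, ((∫ ω, ξ i ω ^ q ∂P) - (∫ ω, ξ i ω ∂P) ^ q) := by
  have hq0 : (0:ℝ) < q := by linarith
  classical
  have main : ∀ s : Finset (Fin ℓ),
      Integrable (fun ω => (∑ i ∈ s, ξ i ω) ^ q) P ∧
      (∫ ω, (∑ i ∈ s, ξ i ω) ^ q ∂P) - (∫ ω, (∑ i ∈ s, ξ i ω) ∂P) ^ q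
        ≤ ∑ i ∈ s, ((∫ ω, ξ i ω ^ q ∂P) - (∫ ω, ξ i ω ∂P) ^ q) := by
    intro s
    induction s using Finset.induction_on with
    | empty =>
      constructor
      · simp [Real.zero_rpow hq0.ne']
      · simp [Real.zero_rpow hq0.ne']
    | insert i s hi IH =>
      obtain ⟨IHint, IHle⟩ := IH
      set X : Ω → ℝ := fun ω => ∑ j ∈ s, ξ j ω with hX
      have hXm : Measurable X := Finset.measurable_sum s (fun j _ => hmeas j)
      have hXnn : ∀ ω, 0 ≤ X ω := fun ω => Finset.sum_nonneg (fun j _ => hnn j ω)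
      have hXi : Integrable X P := integrable_finset_sum s (fun j _ => hint1 j)
      have hXind : IndepFun X (ξ i) P := by
        have h := hind.indepFun_finsetSum_of_notMem hmeas hi
        have he : (∑ j ∈ s, ξ j) = X := by
          funext ω; simp [hX, Finset.sum_apply]
        rwa [he] at h
      have hfun1 : (fun ω => (∑ j ∈ insert i s, ξ j ω) ^ q)
          = (fun ω => (X ω + ξ i ω) ^ q) := by
        funext ω; rw [Finset.sum_insert hi, add_comm]
      have hfun2 : (fun ω => (∑ j ∈ insert i s, ξ j ω))
          = (fun ω => X ω + ξ i ω) := by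
        funext ω; rw [Finset.sum_insert hi, add_comm]
      constructor
      · rw [hfun1]
        exact neveu_integrable_add_rpow hq0.le hXm (hmeas i) hXnn (hnn i) IHint (hintq i)
      · have hstep := neveu_step hq1 hq2 hXm (hmeas i) hXnn (hnn i) hXi (hint1 i)
          IHint (hintq i) hXind
        rw [hfun1, hfun2, Finset.sum_insert hi]
        linarith
  simpa using (main Finset.univ).2
end

section
/- Let (Z_k)_{0≤k≤n} be an inhomogeneous branching process: Z_0 = 1 and Z_{k+1} = ∑_{a=1}^{Z_k} X_{k,a} with (X_{k,a})_a i.i.d. with law μ_k, mean ν_k, and q-variance σ_{q,k} for some q ∈ (1,2]. Let M_k = ∏_{i=0}^{k-1} ν_i. Then E[Z_n^q] ≤ M_n^q + ∑_{i=0}^{n-1} (M_{i+1,n})^q σ_{q,i} M_i, where M_{i,n} = ∏_{j=i}^{n-1} ν_j; equivalently E[(Z_n/M_n)^q] ≤ 1 + ∑_{i=0}^{n-1} σ_{q,i} M_i^{-(q-1)}. -/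
set_option maxHeartbeats 1000000

open Finset Set

namespace Stmt14Aux

lemma tangent_conv {q x c : ℝ} (hq : 1 ≤ q) (hx : 0 ≤ x) (hc : 0 < c) :
    c ^ q + q * c ^ (q - 1) * (x - c) ≤ x ^ q := by
  have hs : (-1:ℝ) ≤ x / c - 1 := by
    have : 0 ≤ x / c := div_nonneg hx hc.le
    linarith
  have hB := one_add_mul_self_le_rpow_one_add hs hq
  rw [add_sub_cancel] at hB
  have hA : (0:ℝ) < c ^ q := Real.rpow_pos_of_pos hc q
  have hpow : (x / c) ^ q = x ^ q / c ^ q := Real.div_rpow hx hc.le q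
  have h1 : c ^ (q - 1) = c ^ q / c := by
    rw [Real.rpow_sub hc, Real.rpow_one]
  have hB' := mul_le_mul_of_nonneg_left hB hA.le
  rw [hpow, mul_div_cancel₀ _ hA.ne'] at hB'
  rw [h1]
  calc c ^ q + q * (c ^ q / c) * (x - c)
      = c ^ q * (1 + q * (x / c - 1)) := by field_simp
    _ ≤ x ^ q := hB'

lemma rpow_diff_antitone {p a b c : ℝ} (hp0 : 0 ≤ p) (hp1 : p ≤ 1) (ha : 0 ≤ a)
    (hab : a ≤ b) (hc : 0 ≤ c) :
    (b + c) ^ p - b ^ p ≤ (a + c) ^ p - a ^ p := by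
  have hb : 0 ≤ b := ha.trans hab
  set D := b + c - a with hD
  rcases eq_or_lt_of_le (show (0:ℝ) ≤ D by simp [hD]; linarith) with h0 | hDpos
  · -- D = 0 : then c = 0 and a = b
    have hc0 : c = 0 := by simp [hD] at h0; linarith
    have hab' : a = b := by simp [hD, hc0] at h0; linarith
    simp [hc0, hab']
  · have K := Real.concaveOn_rpow hp0 hp1
    set t := c / D with ht
    have ht0 : 0 ≤ t := div_nonneg hc hDpos.le
    have ht1 : t ≤ 1 := by
      rw [div_le_one hDpos]; simp [hD]; linarith
    have h1 : (1 - t) • (b + c) + t • a = b := by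
      simp only [smul_eq_mul, ht]
      field_simp
      ring
    have h2 : t • (b + c) + (1 - t) • a = a + c := by
      simp only [smul_eq_mul, ht]
      field_simp
      ring
    have m1 : (b + c) ∈ Set.Ici (0:ℝ) := by simp; linarith
    have m2 : a ∈ Set.Ici (0:ℝ) := ha
    have K1 := K.2 m1 m2 (show (0:ℝ) ≤ 1 - t by linarith) ht0 (show (1-t)+t = 1 by ring)
    rw [h1] at K1
    have K2 := K.2 m1 m2 ht0 (show (0:ℝ) ≤ 1 - t by linarith) (show t+(1-t) = 1 by ring)
    rw [h2] at K2
    simp only [smul_eq_mul] at K1 K2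
    linarith

/-- `h(x) = (x+c)^q - x^q` lies below its tangent line at `m`, for `x, m ≥ 0`. -/
lemma tangent_h {q c m x : ℝ} (hq1 : 1 < q) (hq2 : q ≤ 2) (hc : 0 ≤ c) (hm : 0 ≤ m)
    (hx : 0 ≤ x) :
    (x + c) ^ q - x ^ q ≤ (m + c) ^ q - m ^ q
      + q * ((m + c) ^ (q - 1) - m ^ (q - 1)) * (x - m) := by
  set s : ℝ := q * ((m + c) ^ (q - 1) - m ^ (q - 1)) with hs
  set g : ℝ → ℝ := fun t => (m + c) ^ q - m ^ q + s * (t - m) - ((t + c) ^ q - t ^ q)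
    with hg
  have hderiv : ∀ t : ℝ, HasDerivAt g (s - (q * (t + c) ^ (q - 1) - q * t ^ (q - 1))) t := by
    intro t
    have h1 : HasDerivAt (fun t : ℝ => t + c) 1 t := (hasDerivAt_id t).add_const c
    have h2 : HasDerivAt (fun y : ℝ => y ^ q) (q * (t + c) ^ (q - 1)) (t + c) :=
      Real.hasDerivAt_rpow_const (Or.inr hq1.le)
    have h3 : HasDerivAt (fun t : ℝ => (t + c) ^ q) (q * (t + c) ^ (q - 1)) t := by
      have h := h2.comp t h1; rw [mul_one] at h; exact h
    have h4 : HasDerivAt (fun t : ℝ => t ^ q) (q * t ^ (q - 1)) t :=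
      Real.hasDerivAt_rpow_const (Or.inr hq1.le)
    have h5 : HasDerivAt (fun t : ℝ => (m + c) ^ q - m ^ q + s * (t - m)) s t := by
      simpa using (((hasDerivAt_id t).sub_const m).const_mul s).const_add
        ((m + c) ^ q - m ^ q)
    exact h5.sub (h3.sub h4)
  have hgm : g m = 0 := by simp [hg]
  have key : 0 ≤ g x := by
    rcases le_total m x with hmx | hxm
    · -- g monotone on [m, x]
      have mono : MonotoneOn g (Icc m x) := by
        apply monotoneOn_of_deriv_nonneg (convex_Icc m x)
          (fun t _ => (hderiv t).differentiableAt.continuousAt.continuousWithinAt)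
          (fun t _ => (hderiv t).differentiableAt.differentiableWithinAt)
        intro t ht
        rw [interior_Icc] at ht
        rw [(hderiv t).deriv]
        have hd := rpow_diff_antitone (p := q - 1) (by linarith) (by linarith) hm
          ht.1.le hc
        rw [hs]
        nlinarith [hd]
      have := mono (left_mem_Icc.2 hmx) (right_mem_Icc.2 hmx) hmx
      rwa [hgm] at this
    · -- g antitone on [x, m]
      have anti : AntitoneOn g (Icc x m) := by
        apply antitoneOn_of_deriv_nonpos (convex_Icc x m)
          (fun t _ => (hderiv t).differentiableAt.continuousAt.continuousWithinAt)
          (fun t _ => (hderiv t).differentiableAt.differentiableWithinAt)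
        intro t ht
        rw [interior_Icc] at ht
        rw [(hderiv t).deriv]
        have hd := rpow_diff_antitone (p := q - 1) (by linarith) (by linarith)
          (hx.trans ht.1.le) ht.2.le hc
        rw [hs]
        nlinarith [hd]
      have := anti (left_mem_Icc.2 hxm) (right_mem_Icc.2 hxm) hxm
      rwa [hgm] at this
  simp only [hg] at key
  linarith

lemma summable_weight {a : ℕ → ℝ} (hann : ∀ n, 0 ≤ a n) (ha : Summable a) {s : ℝ}
    (h0 : 0 ≤ s) (h1 : s ≤ 1) : Summable fun n => a n * s ^ n :=
  Summable.of_nonneg_of_le (fun n => mul_nonneg (hann n) (pow_nonneg h0 n))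
    (fun n => mul_le_of_le_one_right (hann n) (pow_le_one₀ h0 h1)) ha

lemma tsum_shift {a : ℕ → ℝ} (hann : ∀ n, 0 ≤ a n) (ha : Summable a) {s : ℝ}
    (h0 : 0 ≤ s) (h1 : s ≤ 1) :
    ∑' n, a n * s ^ n = a 0 + s * ∑' n, a (n + 1) * s ^ n := by
  have hs1 : Summable fun n => a n * s ^ n := summable_weight hann ha h0 h1
  rw [Summable.tsum_eq_zero_add hs1]
  simp only [pow_zero, mul_one, pow_succ]
  rw [← tsum_mul_left]
  congr 1
  exact tsum_congr fun n => by ring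

lemma coeff_ident (n : ℕ) : ∀ (a b : ℕ → ℝ), (∀ m, 0 ≤ a m) → (∀ m, 0 ≤ b m) →
    Summable a → Summable b →
    (∀ s ∈ Set.Ioc (0:ℝ) 1, ∑' m, a m * s ^ m = ∑' m, b m * s ^ m) → a n = b n := by
  have base : ∀ (a b : ℕ → ℝ), (∀ m, 0 ≤ a m) → (∀ m, 0 ≤ b m) →
      Summable a → Summable b →
      (∀ s ∈ Set.Ioc (0:ℝ) 1, ∑' m, a m * s ^ m = ∑' m, b m * s ^ m) → a 0 = b 0 := by
    intro a b hann hbnn ha hb heq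
    have ha' : Summable fun m => a (m + 1) := (summable_nat_add_iff 1).2 ha
    have hb' : Summable fun m => b (m + 1) := (summable_nat_add_iff 1).2 hb
    set C : ℝ := (∑' m, a (m + 1)) + ∑' m, b (m + 1) with hC
    have hCnn : 0 ≤ C := add_nonneg (tsum_nonneg fun m => hann _) (tsum_nonneg fun m => hbnn _)
    have key : ∀ s ∈ Set.Ioc (0:ℝ) 1, |a 0 - b 0| ≤ s * C := by
      intro s hs
      obtain ⟨hs0, hs1⟩ := hs
      have e1 := tsum_shift hann ha hs0.le hs1
      have e2 := tsum_shift hbnn hb hs0.le hs1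
      have e3 := heq s ⟨hs0, hs1⟩
      have hAle : ∑' m, a (m + 1) * s ^ m ≤ ∑' m, a (m + 1) :=
        Summable.tsum_le_tsum (fun m => mul_le_of_le_one_right (hann _) (pow_le_one₀ hs0.le hs1))
          (summable_weight (fun m => hann _) ha' hs0.le hs1) ha'
      have hBle : ∑' m, b (m + 1) * s ^ m ≤ ∑' m, b (m + 1) :=
        Summable.tsum_le_tsum (fun m => mul_le_of_le_one_right (hbnn _) (pow_le_one₀ hs0.le hs1))
          (summable_weight (fun m => hbnn _) hb' hs0.le hs1) hb'
      have hAnn : 0 ≤ ∑' m, a (m + 1) * s ^ m :=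
        tsum_nonneg fun m => mul_nonneg (hann _) (pow_nonneg hs0.le m)
      have hBnn : 0 ≤ ∑' m, b (m + 1) * s ^ m :=
        tsum_nonneg fun m => mul_nonneg (hbnn _) (pow_nonneg hs0.le m)
      rw [e1, e2] at e3
      rw [abs_le]
      constructor <;> nlinarith
    have : |a 0 - b 0| ≤ 0 := by
      refine le_of_forall_pos_le_add ?_
      intro ε hε
      have hsel : (min 1 (ε / (C + 1))) ∈ Set.Ioc (0:ℝ) 1 := by
        constructor
        · exact lt_min one_pos (div_pos hε (by linarith))
        · exact min_le_left _ _
      calc |a 0 - b 0| ≤ min 1 (ε / (C + 1)) * C := key _ hsel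
        _ ≤ (ε / (C + 1)) * C :=
            mul_le_mul_of_nonneg_right (min_le_right _ _) hCnn
        _ ≤ ε := by
            rw [div_mul_eq_mul_div, div_le_iff₀ (by linarith : (0:ℝ) < C + 1)]
            nlinarith
        _ ≤ 0 + ε := by linarith
    exact sub_eq_zero.mp (abs_nonpos_iff.mp this)
  induction n with
  | zero => exact base
  | succ n ih =>
    intro a b hann hbnn ha hb heq
    have h0 := base a b hann hbnn ha hb heq
    have heq' : ∀ s ∈ Set.Ioc (0:ℝ) 1,
        ∑' m, a (m + 1) * s ^ m = ∑' m, b (m + 1) * s ^ m := by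
      intro s hs
      obtain ⟨hs0, hs1⟩ := hs
      have e1 := tsum_shift hann ha hs0.le hs1
      have e2 := tsum_shift hbnn hb hs0.le hs1
      have e3 := heq s ⟨hs0, hs1⟩
      rw [e1, e2, h0] at e3
      exact mul_left_cancel₀ hs0.ne' (by linarith)
    exact ih (fun m => a (m + 1)) (fun m => b (m + 1)) (fun m => hann _) (fun m => hbnn _)
      ((summable_nat_add_iff 1).2 ha) ((summable_nat_add_iff 1).2 hb) heq'

/-- convolution of two sequences (coefficients of a product of power series) -/
def conv (f g : ℕ → ℝ) (d : ℕ) : ℝ := ∑ kl ∈ Finset.HasAntidiagonal.antidiagonal d, f kl.1 * g kl.2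

/-- iterated convolution power -/
def convPow (f : ℕ → ℝ) : ℕ → ℕ → ℝ
  | 0 => fun d => if d = 0 then 1 else 0
  | m + 1 => conv f (convPow f m)

lemma summable_norm_of_nonneg {f : ℕ → ℝ} (hn : ∀ n, 0 ≤ f n) (hf : Summable f) :
    Summable fun n => ‖f n‖ := hf.congr fun n => (Real.norm_of_nonneg (hn n)).symm

lemma prod_summable {f g : ℕ → ℝ} (hfn : ∀ n, 0 ≤ f n) (hgn : ∀ n, 0 ≤ g n)
    (hf : Summable f) (hg : Summable g) : Summable fun p : ℕ × ℕ => f p.1 * g p.2 :=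
  summable_mul_of_summable_norm (summable_norm_of_nonneg hfn hf) (summable_norm_of_nonneg hgn hg)

lemma conv_nonneg {f g : ℕ → ℝ} (hfn : ∀ n, 0 ≤ f n) (hgn : ∀ n, 0 ≤ g n) (d : ℕ) :
    0 ≤ conv f g d :=
  Finset.sum_nonneg fun kl _ => mul_nonneg (hfn _) (hgn _)

lemma conv_summable {f g : ℕ → ℝ} (hfn : ∀ n, 0 ≤ f n) (hgn : ∀ n, 0 ≤ g n)
    (hf : Summable f) (hg : Summable g) : Summable (conv f g) :=
  summable_sum_mul_antidiagonal_of_summable_mul (prod_summable hfn hgn hf hg)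

lemma conv_tsum {f g : ℕ → ℝ} (hfn : ∀ n, 0 ≤ f n) (hgn : ∀ n, 0 ≤ g n)
    (hf : Summable f) (hg : Summable g) :
    ∑' d, conv f g d = (∑' n, f n) * (∑' n, g n) :=
  (Summable.tsum_mul_tsum_eq_tsum_sum_antidiagonal hf hg (prod_summable hfn hgn hf hg)).symm

/-- grouping a summable family on `ℕ × ℕ` along antidiagonals -/
lemma antidiag_summable {F : ℕ × ℕ → ℝ} (h : Summable F) :
    Summable fun d => ∑ kl ∈ Finset.HasAntidiagonal.antidiagonal d, F kl := by
  have hsig : Summable fun x : Σ n : ℕ, Finset.HasAntidiagonal.antidiagonal n => F x.2 :=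
    Finset.HasAntidiagonal.sigmaAntidiagonalEquivProd.summable_iff.mpr h
  have := hsig.sigma' (fun n => (hasSum_fintype _).summable)
  refine this.congr fun d => ?_
  rw [← Finset.sum_finset_coe, ← tsum_fintype (L := .unconditional _)]
  rfl

lemma antidiag_tsum {F : ℕ × ℕ → ℝ} (h : Summable F) :
    ∑' p, F p = ∑' d, ∑ kl ∈ Finset.HasAntidiagonal.antidiagonal d, F kl := by
  have hsig : Summable fun x : Σ n : ℕ, Finset.HasAntidiagonal.antidiagonal n => F x.2 :=
    Finset.HasAntidiagonal.sigmaAntidiagonalEquivProd.summable_iff.mpr h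
  conv_rhs => congr; ext d; rw [← Finset.sum_finset_coe, ← tsum_fintype (L := .unconditional _)]
  rw [← Finset.HasAntidiagonal.sigmaAntidiagonalEquivProd.tsum_eq F]
  exact Summable.tsum_sigma' (fun n => (hasSum_fintype _).summable) hsig

lemma convPow_nonneg {f : ℕ → ℝ} (hfn : ∀ n, 0 ≤ f n) : ∀ m d, 0 ≤ convPow f m d := by
  intro m
  induction m with
  | zero =>
    intro d
    simp only [convPow]
    split <;> norm_num
  | succ m ih => exact fun d => conv_nonneg hfn ih d

lemma convPow_summable {f : ℕ → ℝ} (hfn : ∀ n, 0 ≤ f n) (hf : Summable f) :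
    ∀ m, Summable (convPow f m) := by
  intro m
  induction m with
  | zero =>
    simp only [convPow]
    exact (hasSum_ite_eq 0 (1:ℝ)).summable
  | succ m ih => exact conv_summable hfn (convPow_nonneg hfn m) hf ih

lemma convPow_tsum {f : ℕ → ℝ} (hfn : ∀ n, 0 ≤ f n) (hf : Summable f) :
    ∀ m, ∑' d, convPow f m d = (∑' n, f n) ^ m := by
  intro m
  induction m with
  | zero =>
    simp only [convPow, pow_zero]
    exact tsum_ite_eq 0 (fun _ => (1:ℝ))
  | succ m ih =>
    show ∑' d, conv f (convPow f m) d = _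
    rw [conv_tsum hfn (convPow_nonneg hfn m) hf (convPow_summable hfn hf m), ih, pow_succ]
    ring

lemma conv_weight (f g : ℕ → ℝ) (s : ℝ) (d : ℕ) :
    conv f g d * s ^ d = conv (fun i => f i * s ^ i) (fun j => g j * s ^ j) d := by
  unfold conv
  rw [Finset.sum_mul]
  refine Finset.sum_congr rfl fun kl hkl => ?_
  rw [Finset.HasAntidiagonal.mem_antidiagonal] at hkl
  rw [← hkl, pow_add]
  ring

lemma convPow_weight (f : ℕ → ℝ) (s : ℝ) : ∀ m d,
    convPow f m d * s ^ d = convPow (fun i => f i * s ^ i) m d := by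
  intro m
  induction m with
  | zero =>
    intro d
    by_cases h : d = 0 <;> simp [convPow, h]
  | succ m ih =>
    intro d
    show conv f (convPow f m) d * s ^ d = conv _ (convPow (fun i => f i * s ^ i) m) d
    rw [conv_weight, funext ih]

lemma conv_mul_id (f g : ℕ → ℝ) (d : ℕ) :
    conv f g d * (d:ℝ) = conv (fun i => f i * (i:ℝ)) g d + conv f (fun j => g j * (j:ℝ)) d := by
  unfold conv
  rw [Finset.sum_mul, ← Finset.sum_add_distrib]
  refine Finset.sum_congr rfl fun kl hkl => ?_
  rw [Finset.HasAntidiagonal.mem_antidiagonal] at hkl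
  have h : (d:ℝ) = (kl.1:ℝ) + (kl.2:ℝ) := by exact_mod_cast hkl.symm
  rw [h]
  ring

lemma convPow_mean {f : ℕ → ℝ} (hfn : ∀ n, 0 ≤ f n) (hf : Summable f)
    (hf1 : ∑' n, f n = 1) (hmean : Summable fun n => f n * (n:ℝ)) :
    ∀ m, Summable (fun d => convPow f m d * (d:ℝ)) ∧
      ∑' d, convPow f m d * (d:ℝ) = (m:ℝ) * ∑' n, f n * (n:ℝ) := by
  have hfn' : ∀ n, 0 ≤ f n * (n:ℝ) := fun n => mul_nonneg (hfn n) (Nat.cast_nonneg n)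
  intro m
  induction m with
  | zero =>
    have h0 : (fun d => convPow f 0 d * (d:ℝ)) = fun _ => (0:ℝ) := by
      funext d
      by_cases h : d = 0 <;> simp [convPow, h]
    rw [h0]
    exact ⟨summable_zero, by simp⟩
  | succ m ih =>
    obtain ⟨ihs, iht⟩ := ih
    have hPn := convPow_nonneg hfn m
    have hPs := convPow_summable hfn hf m
    have hPn' : ∀ n, 0 ≤ convPow f m n * (n:ℝ) := fun n => mul_nonneg (hPn n) (Nat.cast_nonneg n)
    have heq : (fun d => convPow f (m+1) d * (d:ℝ))
        = fun d => conv (fun i => f i * (i:ℝ)) (convPow f m) d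
            + conv f (fun j => convPow f m j * (j:ℝ)) d := by
      funext d
      exact conv_mul_id f (convPow f m) d
    have s1 := conv_summable hfn' hPn hmean hPs
    have s2 := conv_summable hfn hPn' hf ihs
    constructor
    · rw [heq]
      exact s1.add s2
    · rw [heq, Summable.tsum_add s1 s2, conv_tsum hfn' hPn hmean hPs, conv_tsum hfn hPn' hf ihs,
        convPow_tsum hfn hf m, iht, hf1]
      push_cast
      ring

lemma jensen_h {q : ℝ} (hq1 : 1 < q) (hq2 : q ≤ 2) {w : ℕ → ℝ} (hwnn : ∀ n, 0 ≤ w n)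
    (hw : Summable w) (hw1 : ∑' n, w n = 1) {mb : ℝ}
    (hmean : Summable fun n => w n * (n:ℝ)) (hmeq : ∑' n, w n * (n:ℝ) = mb) (hmb : 0 < mb)
    {c : ℝ} (hc : 0 ≤ c) :
    Summable (fun n => w n * (((n:ℝ) + c) ^ q - (n:ℝ) ^ q)) ∧
      ∑' n, w n * (((n:ℝ) + c) ^ q - (n:ℝ) ^ q) ≤ (mb + c) ^ q - mb ^ q := by
  set s : ℝ := q * ((mb + c) ^ (q - 1) - mb ^ (q - 1)) with hs
  have hsnn : 0 ≤ s := mul_nonneg (by linarith)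
    (sub_nonneg.2 (Real.rpow_le_rpow hmb.le (by linarith) (by linarith)))
  set A : ℝ := (mb + c) ^ q - mb ^ q - s * mb with hA
  have htan : ∀ n : ℕ, ((n:ℝ) + c) ^ q - (n:ℝ) ^ q ≤ A + s * n := by
    intro n
    have h := tangent_h (c := c) (m := mb) (x := (n:ℝ)) hq1 hq2 hc hmb.le (Nat.cast_nonneg n)
    rw [← hs] at h
    rw [hA]
    linarith
  have hTnn : ∀ n : ℕ, 0 ≤ ((n:ℝ) + c) ^ q - (n:ℝ) ^ q := fun n =>
    sub_nonneg.2 (Real.rpow_le_rpow (Nat.cast_nonneg n) (by linarith) (by linarith))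
  have hub : Summable (fun n => A * w n + s * (w n * (n:ℝ))) :=
    (hw.mul_left A).add (hmean.mul_left s)
  have hle : ∀ n : ℕ, w n * (((n:ℝ) + c) ^ q - (n:ℝ) ^ q) ≤ A * w n + s * (w n * (n:ℝ)) := by
    intro n
    calc w n * (((n:ℝ) + c) ^ q - (n:ℝ) ^ q) ≤ w n * (A + s * n) :=
          mul_le_mul_of_nonneg_left (htan n) (hwnn n)
      _ = A * w n + s * (w n * (n:ℝ)) := by ring
  have hwh : Summable (fun n => w n * (((n:ℝ) + c) ^ q - (n:ℝ) ^ q)) :=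
    Summable.of_nonneg_of_le (fun n => mul_nonneg (hwnn n) (hTnn n)) hle hub
  refine ⟨hwh, ?_⟩
  calc ∑' n, w n * (((n:ℝ) + c) ^ q - (n:ℝ) ^ q)
      ≤ ∑' n, (A * w n + s * (w n * (n:ℝ))) := Summable.tsum_le_tsum hle hwh hub
    _ = A * (∑' n, w n) + s * ∑' n, w n * (n:ℝ) := by
        rw [Summable.tsum_add (hw.mul_left A) (hmean.mul_left s), tsum_mul_left, tsum_mul_left]
    _ = (mb + c) ^ q - mb ^ q := by rw [hw1, hmeq, hA]; ring

lemma sigma_nonneg {q : ℝ} (hq1 : 1 < q) {w : ℕ → ℝ} (hwnn : ∀ n, 0 ≤ w n)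
    (hw : Summable w) (hw1 : ∑' n, w n = 1) {nu sg : ℝ}
    (hmean : Summable fun n => w n * (n:ℝ)) (hmeq : ∑' n, w n * (n:ℝ) = nu) (hnu : 0 < nu)
    (hqm : Summable fun n => w n * (n:ℝ) ^ q) (hqeq : ∑' n, w n * (n:ℝ) ^ q = sg + nu ^ q) :
    0 ≤ sg := by
  have hlb : ∀ n : ℕ, w n * (nu ^ q + q * nu ^ (q - 1) * ((n:ℝ) - nu)) ≤ w n * (n:ℝ) ^ q :=
    fun n => mul_le_mul_of_nonneg_left
      (tangent_conv hq1.le (Nat.cast_nonneg n) hnu) (hwnn n)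
  have hlbs : Summable (fun n => w n * (nu ^ q + q * nu ^ (q - 1) * ((n:ℝ) - nu))) := by
    have : (fun n => w n * (nu ^ q + q * nu ^ (q - 1) * ((n:ℝ) - nu)))
        = fun n => (nu ^ q - q * nu ^ (q - 1) * nu) * w n
          + (q * nu ^ (q - 1)) * (w n * (n:ℝ)) := by
      funext n; ring
    rw [this]
    exact (hw.mul_left _).add (hmean.mul_left _)
  have h := Summable.tsum_le_tsum hlb hlbs hqm
  rw [hqeq] at h
  have hval : ∑' n, w n * (nu ^ q + q * nu ^ (q - 1) * ((n:ℝ) - nu)) = nu ^ q := by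
    have e : (fun n => w n * (nu ^ q + q * nu ^ (q - 1) * ((n:ℝ) - nu)))
        = fun n => (nu ^ q - q * nu ^ (q - 1) * nu) * w n
          + (q * nu ^ (q - 1)) * (w n * (n:ℝ)) := by
      funext n; ring
    rw [e, Summable.tsum_add (hw.mul_left _) (hmean.mul_left _), tsum_mul_left, tsum_mul_left, hw1, hmeq]
    ring
  rw [hval] at h
  linarith

lemma cast_succ_rpow_le {q : ℝ} (hq0 : 0 < q) (j : ℕ) :
    ((j:ℝ) + 1) ^ q ≤ 2 ^ q * (1 + (j:ℝ) ^ q) := by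
  rcases Nat.eq_zero_or_pos j with h | h
  · subst h
    simp only [Nat.cast_zero, zero_add, Real.one_rpow, Real.zero_rpow hq0.ne', add_zero, mul_one]
    exact Real.one_le_rpow one_le_two hq0.le
  · have h1 : (j:ℝ) + 1 ≤ 2 * j := by
      have : (1:ℝ) ≤ j := by exact_mod_cast h
      linarith
    calc ((j:ℝ) + 1) ^ q ≤ (2 * (j:ℝ)) ^ q :=
          Real.rpow_le_rpow (by positivity) h1 hq0.le
      _ = 2 ^ q * (j:ℝ) ^ q := Real.mul_rpow (by norm_num) (Nat.cast_nonneg j)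
      _ ≤ 2 ^ q * (1 + (j:ℝ) ^ q) := by
          have : (0:ℝ) ≤ 2 ^ q := Real.rpow_nonneg (by norm_num) q
          nlinarith

lemma sum_antidiag_swap (F : ℕ × ℕ → ℝ) (d : ℕ) :
    ∑ kl ∈ Finset.HasAntidiagonal.antidiagonal d, F kl = ∑ kl ∈ Finset.HasAntidiagonal.antidiagonal d, F kl.swap := by
  conv_lhs => rw [← Finset.HasAntidiagonal.map_swap_antidiagonal]
  rw [Finset.sum_map]
  rfl

lemma conv_delta {f : ℕ → ℝ} (d : ℕ) : conv f (convPow f 0) d = f d := by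
  unfold conv convPow
  rw [Finset.sum_eq_single (d, 0)]
  · simp
  · intro b hb hbne
    rw [Finset.HasAntidiagonal.mem_antidiagonal] at hb
    have : b.2 ≠ 0 := by
      intro h2
      apply hbne
      have : b.1 = d := by omega
      exact Prod.ext this h2
    simp [this]
  · intro h
    exact absurd (by simp [Finset.HasAntidiagonal.mem_antidiagonal]) h

/-- q-th moment bound for convolution powers (Neveu's inequality, iterated) -/
lemma convPow_qmom {q : ℝ} (hq1 : 1 < q) (hq2 : q ≤ 2) {f : ℕ → ℝ} (hfn : ∀ n, 0 ≤ f n)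
    (hf : Summable f) (hf1 : ∑' n, f n = 1)
    {nu sg : ℝ} (hmean : Summable fun n => f n * (n:ℝ)) (hmeq : ∑' n, f n * (n:ℝ) = nu)
    (hnu : 1 ≤ nu)
    (hqm : Summable fun n => f n * (n:ℝ) ^ q) (hqeq : ∑' n, f n * (n:ℝ) ^ q = sg + nu ^ q) :
    ∀ m, Summable (fun d => convPow f m d * (d:ℝ) ^ q) ∧
      ∑' d, convPow f m d * (d:ℝ) ^ q ≤ ((m:ℝ) * nu) ^ q + (m:ℝ) * sg := by
  have hq0 : (0:ℝ) < q := by linarith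
  have hnu0 : (0:ℝ) < nu := by linarith
  intro m
  induction m with
  | zero =>
    have h0 : (fun d => convPow f 0 d * (d:ℝ) ^ q) = fun _ => (0:ℝ) := by
      funext d
      rcases Nat.eq_zero_or_pos d with h | h
      · subst h; simp [convPow, Real.zero_rpow hq0.ne']
      · simp [convPow, Nat.pos_iff_ne_zero.mp h]
    rw [h0]
    refine ⟨summable_zero, ?_⟩
    simp [Real.zero_rpow hq0.ne']
  | succ m ih =>
    rcases Nat.eq_zero_or_pos m with hm0 | hm1
    · subst hm0
      have he : (fun d => convPow f 1 d * (d:ℝ) ^ q) = fun d => f d * (d:ℝ) ^ q := by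
        funext d
        show conv f (convPow f 0) d * (d:ℝ) ^ q = _
        rw [conv_delta]
      rw [he]
      refine ⟨hqm, ?_⟩
      rw [hqeq]
      push_cast
      rw [one_mul]
      linarith
    · -- main step, m ≥ 1
      obtain ⟨ihs, iht⟩ := ih
      set P := convPow f m with hP
      have hPn : ∀ n, 0 ≤ P n := convPow_nonneg hfn m
      have hPs : Summable P := convPow_summable hfn hf m
      have hP1 : ∑' d, P d = 1 := by rw [hP, convPow_tsum hfn hf, hf1, one_pow]
      obtain ⟨hPms, hPmt⟩ := convPow_mean hfn hf hf1 hmean m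
      rw [hmeq] at hPmt
      have hmb : (0:ℝ) < (m:ℝ) * nu := by
        have : (1:ℝ) ≤ (m:ℝ) := by exact_mod_cast hm1
        nlinarith
      -- the product family
      set G : ℕ × ℕ → ℝ := fun p => P p.1 * (f p.2 * ((p.2:ℝ) + (p.1:ℝ)) ^ q) with hG
      have hGnn : ∀ p, 0 ≤ G p := fun p =>
        mul_nonneg (hPn _) (mul_nonneg (hfn _) (Real.rpow_nonneg (by positivity) q))
      -- summability of G
      have hmaj1 : Summable (fun j => 2 ^ q * (P j + P j * (j:ℝ) ^ q)) :=
        (hPs.add ihs).mul_left _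
      have hB1 : Summable (fun j => P j * ((j:ℝ) + 1) ^ q) := by
        refine Summable.of_nonneg_of_le
          (fun j => mul_nonneg (hPn j) (Real.rpow_nonneg (by positivity) q))
          (fun j => ?_) hmaj1
        calc P j * ((j:ℝ) + 1) ^ q ≤ P j * (2 ^ q * (1 + (j:ℝ) ^ q)) :=
              mul_le_mul_of_nonneg_left (cast_succ_rpow_le hq0 j) (hPn j)
          _ = 2 ^ q * (P j + P j * (j:ℝ) ^ q) := by ring
      have hmaj2 : Summable (fun i => 2 ^ q * (f i + f i * (i:ℝ) ^ q)) :=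
        (hf.add hqm).mul_left _
      have hB2 : Summable (fun i => f i * ((i:ℝ) + 1) ^ q) := by
        refine Summable.of_nonneg_of_le
          (fun i => mul_nonneg (hfn i) (Real.rpow_nonneg (by positivity) q))
          (fun i => ?_) hmaj2
        calc f i * ((i:ℝ) + 1) ^ q ≤ f i * (2 ^ q * (1 + (i:ℝ) ^ q)) :=
              mul_le_mul_of_nonneg_left (cast_succ_rpow_le hq0 i) (hfn i)
          _ = 2 ^ q * (f i + f i * (i:ℝ) ^ q) := by ring
      have hSG : Summable G := by
        refine Summable.of_nonneg_of_le hGnn (fun p => ?_)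
          (prod_summable (fun j => mul_nonneg (hPn j) (Real.rpow_nonneg (by positivity) q))
            (fun i => mul_nonneg (hfn i) (Real.rpow_nonneg (by positivity) q)) hB1 hB2)
        have hcast : ((p.2:ℝ) + (p.1:ℝ)) ≤ ((p.1:ℝ) + 1) * ((p.2:ℝ) + 1) := by
          have h1 : (0:ℝ) ≤ p.1 := Nat.cast_nonneg _
          have h2 : (0:ℝ) ≤ p.2 := Nat.cast_nonneg _
          nlinarith
        calc G p = P p.1 * f p.2 * ((p.2:ℝ) + (p.1:ℝ)) ^ q := by rw [hG]; ring
          _ ≤ P p.1 * f p.2 * (((p.1:ℝ) + 1) ^ q * ((p.2:ℝ) + 1) ^ q) := by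
              refine mul_le_mul_of_nonneg_left ?_ (mul_nonneg (hPn _) (hfn _))
              rw [← Real.mul_rpow (by positivity) (by positivity)]
              exact Real.rpow_le_rpow (by positivity) hcast hq0.le
          _ = P p.1 * ((p.1:ℝ) + 1) ^ q * (f p.2 * ((p.2:ℝ) + 1) ^ q) := by ring
      -- pointwise identification with conv
      have hE1 : ∀ d, conv f P d * (d:ℝ) ^ q = ∑ kl ∈ Finset.HasAntidiagonal.antidiagonal d, G kl := by
        intro d
        rw [sum_antidiag_swap G d]
        unfold conv
        rw [Finset.sum_mul]
        refine Finset.sum_congr rfl fun kl hkl => ?_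
        rw [Finset.HasAntidiagonal.mem_antidiagonal] at hkl
        have hc : (d:ℝ) = (kl.1:ℝ) + (kl.2:ℝ) := by exact_mod_cast hkl.symm
        simp only [hG, Prod.snd_swap, Prod.fst_swap]
        rw [hc]
        ring
      have hsum1 : Summable (fun d => convPow f (m+1) d * (d:ℝ) ^ q) := by
        have := antidiag_summable hSG
        exact this.congr (fun d => (hE1 d).symm)
      refine ⟨hsum1, ?_⟩
      -- inner sums
      have hJf := jensen_h hq1 hq2 hfn hf hf1 hmean hmeq hnu0 (c := (0:ℝ))
      -- rows of G
      have hrow : ∀ j : ℕ, Summable (fun i => G (j, i)) := by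
        intro j
        refine Summable.of_nonneg_of_le (fun i => hGnn _) (fun i => le_rfl) ?_
        have hin : Summable (fun i : ℕ => f i * (((i:ℝ) + (j:ℝ)) ^ q)) := by
          have hJ := jensen_h hq1 hq2 hfn hf hf1 hmean hmeq hnu0 (c := (j:ℝ))
            (Nat.cast_nonneg j)
          have := hqm.add hJ.1
          exact this.congr (fun i => by ring)
        exact (hin.mul_left (P j)).congr (fun i => by rw [hG])
      have hIval : ∀ j : ℕ,
          ∑' i, f i * (((i:ℝ) + (j:ℝ)) ^ q) ≤ sg + (nu + (j:ℝ)) ^ q := by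
        intro j
        have hJ := jensen_h hq1 hq2 hfn hf hf1 hmean hmeq hnu0 (c := (j:ℝ))
          (Nat.cast_nonneg j)
        have hsplit : ∑' i, f i * (((i:ℝ) + (j:ℝ)) ^ q)
            = (∑' i, f i * (i:ℝ) ^ q) + ∑' i, f i * (((i:ℝ) + (j:ℝ)) ^ q - (i:ℝ) ^ q) := by
          rw [← Summable.tsum_add hqm hJ.1]
          exact tsum_congr fun i => by ring
        rw [hsplit, hqeq]
        have := hJ.2
        linarith
      -- row sums of G
      have hrowsum : ∀ j : ℕ, ∑' i, G (j, i) = P j * ∑' i, f i * (((i:ℝ) + (j:ℝ)) ^ q) := by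
        intro j
        rw [← tsum_mul_left]
      have hrowS : Summable (fun j => ∑' i, G (j, i)) :=
        ((summable_prod_of_nonneg hGnn).mp hSG).2
      -- RHS majorant summable
      have hmaj3 : Summable (fun j => nu ^ q * 2 ^ q * (P j + P j * (j:ℝ) ^ q)) :=
        (hPs.add ihs).mul_left _
      have hSB : Summable (fun j => P j * (nu + (j:ℝ)) ^ q) := by
        refine Summable.of_nonneg_of_le
          (fun j => mul_nonneg (hPn j) (Real.rpow_nonneg (by positivity) q))
          (fun j => ?_) hmaj3
        have h1 : nu + (j:ℝ) ≤ nu * (1 + (j:ℝ)) := by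
          have : (0:ℝ) ≤ (j:ℝ) := Nat.cast_nonneg j
          nlinarith
        calc P j * (nu + (j:ℝ)) ^ q ≤ P j * (nu * (1 + (j:ℝ))) ^ q := by
              refine mul_le_mul_of_nonneg_left
                (Real.rpow_le_rpow (by positivity) h1 hq0.le) (hPn j)
          _ = P j * (nu ^ q * (1 + (j:ℝ)) ^ q) := by
              rw [Real.mul_rpow (by positivity) (by positivity)]
          _ = P j * (nu ^ q * ((j:ℝ) + 1) ^ q) := by rw [add_comm 1 ((j:ℝ))]
          _ ≤ P j * (nu ^ q * (2 ^ q * (1 + (j:ℝ) ^ q))) := by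
              refine mul_le_mul_of_nonneg_left ?_ (hPn j)
              exact mul_le_mul_of_nonneg_left (cast_succ_rpow_le hq0 j) (by positivity)
          _ = nu ^ q * 2 ^ q * (P j + P j * (j:ℝ) ^ q) := by ring
      have hRHSsum : Summable (fun j => P j * (sg + (nu + (j:ℝ)) ^ q)) := by
        have := (hPs.mul_right sg).add hSB
        exact this.congr (fun j => by ring)
      -- chain
      have hchain : ∑' d, convPow f (m+1) d * (d:ℝ) ^ q
          = ∑' j, P j * ∑' i, f i * (((i:ℝ) + (j:ℝ)) ^ q) := by
        calc ∑' d, convPow f (m+1) d * (d:ℝ) ^ q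
            = ∑' d, ∑ kl ∈ Finset.HasAntidiagonal.antidiagonal d, G kl := tsum_congr hE1
          _ = ∑' p : ℕ × ℕ, G p := (antidiag_tsum hSG).symm
          _ = ∑' j, ∑' i, G (j, i) := Summable.tsum_prod' hSG (fun j => hrow j)
          _ = ∑' j, P j * ∑' i, f i * (((i:ℝ) + (j:ℝ)) ^ q) := tsum_congr hrowsum
      rw [hchain]
      -- jensen over P
      have hJP := jensen_h hq1 hq2 hPn hPs hP1 hPms hPmt hmb (c := nu) hnu0.le
      have hPq : Summable (fun j => P j * (j:ℝ) ^ q) := ihs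
      calc ∑' j, P j * ∑' i, f i * (((i:ℝ) + (j:ℝ)) ^ q)
          ≤ ∑' j, P j * (sg + (nu + (j:ℝ)) ^ q) := by
            refine Summable.tsum_le_tsum (fun j => mul_le_mul_of_nonneg_left (hIval j) (hPn j))
              ?_ hRHSsum
            exact (hrowS.congr hrowsum).congr (fun j => rfl)
        _ = sg * (∑' j, P j) + (∑' j, P j * (((j:ℝ) + nu) ^ q - (j:ℝ) ^ q))
            + ∑' j, P j * (j:ℝ) ^ q := by
            rw [← tsum_mul_left (a := sg), ← Summable.tsum_add ((hPs.mul_left sg).congr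
              (fun j => rfl)) hJP.1, ← Summable.tsum_add (((hPs.mul_left sg).congr (fun j => rfl)).add
              hJP.1) hPq]
            exact tsum_congr fun j => by rw [add_comm nu ((j:ℝ))]; ring
        _ ≤ sg * 1 + (((m:ℝ) * nu + nu) ^ q - ((m:ℝ) * nu) ^ q)
            + (((m:ℝ) * nu) ^ q + (m:ℝ) * sg) := by
            rw [hP1]
            have := hJP.2
            have := iht
            gcongr <;> linarith
        _ = (((m:ℝ) + 1) * nu) ^ q + ((m:ℝ) + 1) * sg := by ring_nf
        _ = ((((m+1):ℕ):ℝ) * nu) ^ q + (((m+1):ℕ):ℝ) * sg := by push_cast; ring_nf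


/-- exchanging the order of summation for a mixture `∑' m, w m * (P m d * g d)`. -/
lemma mix {w : ℕ → ℝ} (hwnn : ∀ m, 0 ≤ w m) {P : ℕ → ℕ → ℝ} (hPnn : ∀ m d, 0 ≤ P m d)
    {g : ℕ → ℝ} (hgnn : ∀ d, 0 ≤ g d)
    (hrow : ∀ m, Summable (fun d => P m d * g d))
    {r : ℕ → ℝ} (hr : Summable r)
    (hrle : ∀ m, w m * ∑' d, P m d * g d ≤ r m) :
    Summable (fun d => (∑' m, w m * P m d) * g d) ∧
      ∑' d, (∑' m, w m * P m d) * g d = ∑' m, w m * ∑' d, P m d * g d := by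
  set W : ℕ × ℕ → ℝ := fun p => w p.1 * (P p.1 p.2 * g p.2) with hWdef
  have hWnn : ∀ p, 0 ≤ W p := fun p =>
    mul_nonneg (hwnn _) (mul_nonneg (hPnn _ _) (hgnn _))
  have hrows : ∀ m, Summable fun d => W (m, d) := fun m => (hrow m).mul_left (w m)
  have hrowsum_eq : ∀ m, ∑' d, W (m, d) = w m * ∑' d, P m d * g d := by
    intro m
    simp only [hWdef]
    exact tsum_mul_left
  have hrowsumS : Summable fun m => ∑' d, W (m, d) := by
    refine Summable.of_nonneg_of_le (fun m => tsum_nonneg fun d => hWnn (m, d))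
      (fun m => ?_) hr
    rw [hrowsum_eq m]
    exact hrle m
  have hW : Summable W := (summable_prod_of_nonneg hWnn).mpr ⟨hrows, hrowsumS⟩
  have hWsw : Summable fun p : ℕ × ℕ => W p.swap := hW.prod_symm
  have hcolrows : ∀ d, Summable fun m => W (m, d) :=
    fun d => ((summable_prod_of_nonneg (fun p => hWnn p.swap)).mp hWsw).1 d
  have hcolsumS : Summable fun d => ∑' m, W (m, d) :=
    ((summable_prod_of_nonneg (fun p => hWnn p.swap)).mp hWsw).2
  have hcol_eq : ∀ d, (∑' m, w m * P m d) * g d = ∑' m, W (m, d) := by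
    intro d
    rw [← tsum_mul_right]
    exact tsum_congr fun m => by rw [hWdef]; ring
  constructor
  · exact hcolsumS.congr fun d => (hcol_eq d).symm
  · calc ∑' d, (∑' m, w m * P m d) * g d = ∑' d, ∑' m, W (m, d) := tsum_congr hcol_eq
      _ = ∑' p : ℕ × ℕ, W p.swap := (Summable.tsum_prod' hWsw fun d => hcolrows d).symm
      _ = ∑' p : ℕ × ℕ, W p := by
          have := (Equiv.prodComm ℕ ℕ).tsum_eq W
          exact this
      _ = ∑' m, ∑' d, W (m, d) := Summable.tsum_prod' hW hrows
      _ = ∑' m, w m * ∑' d, P m d * g d := tsum_congr hrowsum_eq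

/-- one-step transfer: from the pgf recursion, the moments of the next generation. -/
lemma step_lemma {q : ℝ} (hq1 : 1 < q) (hq2 : q ≤ 2) {f : ℕ → ℝ} (hfn : ∀ n, 0 ≤ f n)
    (hf : Summable f) (hf1 : ∑' n, f n = 1)
    {nu sg : ℝ} (hmean : Summable fun n => f n * (n:ℝ)) (hmeq : ∑' n, f n * (n:ℝ) = nu)
    (hnu : 1 ≤ nu)
    (hqm : Summable fun n => f n * (n:ℝ) ^ q) (hqeq : ∑' n, f n * (n:ℝ) ^ q = sg + nu ^ q)
    (hsg : 0 ≤ sg)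
    {w w' : ℕ → ℝ} (hwnn : ∀ m, 0 ≤ w m) (hw'nn : ∀ m, 0 ≤ w' m)
    (hw : Summable w) (hw1 : ∑' m, w m = 1)
    (hwm : Summable fun m => w m * (m:ℝ))
    (hwq : Summable fun m => w m * (m:ℝ) ^ q)
    (hpgf : ∀ s ∈ Set.Icc (0:ℝ) 1,
      ∑' m, w' m * s ^ m = ∑' m, w m * (∑' d, f d * s ^ d) ^ m) :
    Summable w' ∧ (∑' m, w' m = 1) ∧
      Summable (fun m => w' m * (m:ℝ)) ∧
      (∑' m, w' m * (m:ℝ) = nu * ∑' m, w m * (m:ℝ)) ∧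
      Summable (fun m => w' m * (m:ℝ) ^ q) ∧
      ∑' m, w' m * (m:ℝ) ^ q
        ≤ nu ^ q * (∑' m, w m * (m:ℝ) ^ q) + sg * ∑' m, w m * (m:ℝ) := by
  have hq0 : (0:ℝ) < q := by linarith
  have hnu0 : (0:ℝ) < nu := by linarith
  have hPnn := convPow_nonneg hfn
  have hPs := convPow_summable hfn hf
  have hPt : ∀ m, ∑' d, convPow f m d = 1 := by
    intro m; rw [convPow_tsum hfn hf, hf1, one_pow]
  have hPm := convPow_mean hfn hf hf1 hmean
  have hPq := convPow_qmom hq1 hq2 hfn hf hf1 hmean hmeq hnu hqm hqeq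
  -- mass of w'
  have hmass : ∑' m, w' m = 1 := by
    have h := hpgf 1 ⟨zero_le_one, le_refl 1⟩
    simp only [one_pow, mul_one] at h
    rw [hf1] at h
    simpa [hw1] using h
  have hw's : Summable w' := by
    by_contra h
    rw [tsum_eq_zero_of_not_summable h] at hmass
    norm_num at hmass
  -- pgf of convolution powers
  have hpgfP : ∀ s : ℝ, 0 ≤ s → s ≤ 1 → ∀ m,
      Summable (fun d => convPow f m d * s ^ d) ∧
        ∑' d, convPow f m d * s ^ d = (∑' d, f d * s ^ d) ^ m := by
    intro s h0 h1 m
    have hfsnn : ∀ d, 0 ≤ f d * s ^ d := fun d => mul_nonneg (hfn d) (pow_nonneg h0 d)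
    have hfs : Summable fun d => f d * s ^ d := summable_weight hfn hf h0 h1
    constructor
    · exact (convPow_summable hfsnn hfs m).congr fun d => (convPow_weight f s m d).symm
    · rw [tsum_congr (fun d => convPow_weight f s m d), convPow_tsum hfsnn hfs m]
  -- the mixture law
  set R : ℕ → ℝ := fun d => ∑' m, w m * convPow f m d with hRdef
  have hRnn : ∀ d, 0 ≤ R d := fun d =>
    tsum_nonneg fun m => mul_nonneg (hwnn m) (hPnn m d)
  have hFs_mem : ∀ s : ℝ, 0 ≤ s → s ≤ 1 → 0 ≤ (∑' d, f d * s ^ d) ∧ (∑' d, f d * s ^ d) ≤ 1 := by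
    intro s h0 h1
    constructor
    · exact tsum_nonneg fun d => mul_nonneg (hfn d) (pow_nonneg h0 d)
    · rw [← hf1]
      exact Summable.tsum_le_tsum (fun d => mul_le_of_le_one_right (hfn d) (pow_le_one₀ h0 h1))
        (summable_weight hfn hf h0 h1) hf
  have hmix_s : ∀ s : ℝ, 0 ≤ s → s ≤ 1 →
      Summable (fun d => R d * s ^ d) ∧
        ∑' d, R d * s ^ d = ∑' m, w m * (∑' d, f d * s ^ d) ^ m := by
    intro s h0 h1
    have h := mix hwnn hPnn (fun d => pow_nonneg h0 d)
      (fun m => (hpgfP s h0 h1 m).1) (r := w) hw (fun m => ?_)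
    · obtain ⟨hs, he⟩ := h
      refine ⟨hs, ?_⟩
      rw [he]
      exact tsum_congr fun m => by rw [(hpgfP s h0 h1 m).2]
    · rw [(hpgfP s h0 h1 m).2]
      obtain ⟨hF0, hF1⟩ := hFs_mem s h0 h1
      calc w m * (∑' d, f d * s ^ d) ^ m ≤ w m * 1 :=
            mul_le_mul_of_nonneg_left (pow_le_one₀ hF0 hF1) (hwnn m)
        _ = w m := mul_one _
  -- R is summable
  have hmix_1 := hmix_s 1 zero_le_one (le_refl 1)
  have hRs : Summable R := by
    have := hmix_1.1
    exact this.congr fun d => by simp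
  -- identification w' = R
  have hident : ∀ d, w' d = R d := by
    intro d
    refine coeff_ident d w' R hw'nn hRnn hw's hRs ?_
    intro s hs
    rw [hpgf s ⟨hs.1.le, hs.2⟩, (hmix_s s hs.1.le hs.2).2]
  -- mean
  have hrmean : Summable (fun m => w m * ((m:ℝ) * nu)) := by
    have := hwm.mul_right nu
    exact this.congr fun m => by ring
  have hmix_mean := mix hwnn hPnn (g := fun d => (d:ℝ)) (fun d => Nat.cast_nonneg d)
    (fun m => (hPm m).1) (r := fun m => w m * ((m:ℝ) * nu)) hrmean
    (fun m => by rw [(hPm m).2, hmeq])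
  have hmean_eq : ∑' m, w' m * (m:ℝ) = nu * ∑' m, w m * (m:ℝ) := by
    calc ∑' m, w' m * (m:ℝ) = ∑' d, R d * (d:ℝ) := tsum_congr fun d => by rw [hident d]
      _ = ∑' m, w m * ∑' d, convPow f m d * (d:ℝ) := hmix_mean.2
      _ = ∑' m, (w m * (m:ℝ)) * nu := by
          refine tsum_congr fun m => ?_
          rw [(hPm m).2, hmeq]
          ring
      _ = (∑' m, w m * (m:ℝ)) * nu := tsum_mul_right
      _ = nu * ∑' m, w m * (m:ℝ) := mul_comm _ _
  have hmean_s : Summable (fun m => w' m * (m:ℝ)) :=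
    hmix_mean.1.congr fun d => by rw [hident d]
  -- q-th moment
  have hrq : Summable (fun m => w m * (((m:ℝ) * nu) ^ q + (m:ℝ) * sg)) := by
    have h1 : Summable (fun m => nu ^ q * (w m * (m:ℝ) ^ q) + sg * (w m * (m:ℝ))) :=
      (hwq.mul_left _).add (hwm.mul_left _)
    refine h1.congr fun m => ?_
    rw [Real.mul_rpow (Nat.cast_nonneg m) hnu0.le]
    ring
  have hmix_q := mix hwnn hPnn (g := fun d => (d:ℝ) ^ q)
    (fun d => Real.rpow_nonneg (Nat.cast_nonneg d) q)
    (fun m => (hPq m).1) (r := fun m => w m * (((m:ℝ) * nu) ^ q + (m:ℝ) * sg)) hrq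
    (fun m => mul_le_mul_of_nonneg_left (hPq m).2 (hwnn m))
  have hq_s : Summable (fun m => w' m * (m:ℝ) ^ q) :=
    hmix_q.1.congr fun d => by rw [hident d]
  refine ⟨hw's, hmass, hmean_s, hmean_eq, hq_s, ?_⟩
  have hrowS : Summable (fun m => w m * ∑' d, convPow f m d * (d:ℝ) ^ q) := by
    refine Summable.of_nonneg_of_le
      (fun m => mul_nonneg (hwnn m) (tsum_nonneg fun d =>
        mul_nonneg (hPnn m d) (Real.rpow_nonneg (Nat.cast_nonneg d) q)))
      (fun m => mul_le_mul_of_nonneg_left (hPq m).2 (hwnn m)) hrq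
  calc ∑' m, w' m * (m:ℝ) ^ q = ∑' d, R d * (d:ℝ) ^ q :=
        tsum_congr fun d => by rw [hident d]
    _ = ∑' m, w m * ∑' d, convPow f m d * (d:ℝ) ^ q := hmix_q.2
    _ ≤ ∑' m, w m * (((m:ℝ) * nu) ^ q + (m:ℝ) * sg) := by
        refine Summable.tsum_le_tsum (fun m => mul_le_mul_of_nonneg_left (hPq m).2 (hwnn m)) hrowS hrq
    _ = ∑' m, (nu ^ q * (w m * (m:ℝ) ^ q) + sg * (w m * (m:ℝ))) := by
        refine tsum_congr fun m => ?_
        rw [Real.mul_rpow (Nat.cast_nonneg m) hnu0.le]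
        ring
    _ = nu ^ q * (∑' m, w m * (m:ℝ) ^ q) + sg * ∑' m, w m * (m:ℝ) := by
        rw [Summable.tsum_add (hwq.mul_left _) (hwm.mul_left _), tsum_mul_left, tsum_mul_left]

end Stmt14Aux

/-- Moment bound for an inhomogeneous branching process `(Z_k)` with offspring laws
`μ_k` (each supported on positive integers, mean `ν_k`, `q`-variance `σ_{q,k}`):
with `M_{i,j} = ∏_{k=i}^{j-1} ν_k`, one has
`E[Z_n^q] ≤ M_{0,n}^q + ∑_{i<n} M_{i+1,n}^q σ_{q,i} M_{0,i}`.
The law of `Z_k` is characterized by its generating-function recursion. -/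
theorem stmt14 (n : ℕ) (q : ℝ) (hq1 : 1 < q) (hq2 : q ≤ 2)
    (μ : ℕ → ℕ → ℝ) (hμnn : ∀ k d, 0 ≤ μ k d) (hμsum : ∀ k, ∑' d, μ k d = 1)
    (hμ0 : ∀ k, μ k 0 = 0)
    (ν : ℕ → ℝ) (hν : ∀ k, HasSum (fun (d : ℕ) => (d : ℝ) * μ k d) (ν k))
    (σ : ℕ → ℝ) (hσ : ∀ k, HasSum (fun (d : ℕ) => (d : ℝ) ^ q * μ k d) (σ k + ν k ^ q))
    (ρ : ℕ → ℕ → ℝ) (hρnn : ∀ k m, 0 ≤ ρ k m)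
    (hρ0 : ∀ m, ρ 0 m = if m = 1 then 1 else 0)
    (hρpgf : ∀ k, ∀ s ∈ Set.Icc (0 : ℝ) 1,
        ∑' m, ρ (k + 1) m * s ^ m = ∑' m, ρ k m * (∑' d, μ k d * s ^ d) ^ m) :
    ∑' m : ℕ, ρ n m * (m : ℝ) ^ q
      ≤ (∏ i ∈ Finset.range n, ν i) ^ q
          + ∑ i ∈ Finset.range n,
              (∏ j ∈ Finset.Ico (i + 1) n, ν j) ^ q * σ i * ∏ j ∈ Finset.range i, ν j := by
  have hq0 : (0:ℝ) < q := by linarith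
  have hμs : ∀ k, Summable (μ k) := by
    intro k
    by_contra h
    have h1 := hμsum k
    rw [tsum_eq_zero_of_not_summable h] at h1
    norm_num at h1
  have hμmean : ∀ k, Summable (fun d => μ k d * (d:ℝ)) := fun k =>
    (hν k).summable.congr fun d => mul_comm _ _
  have hμmeq : ∀ k, ∑' d, μ k d * (d:ℝ) = ν k := by
    intro k
    rw [tsum_congr (fun d => mul_comm (μ k d) ((d:ℝ)))]
    exact (hν k).tsum_eq
  have hμqm : ∀ k, Summable (fun d => μ k d * (d:ℝ) ^ q) := fun k =>
    (hσ k).summable.congr fun d => mul_comm _ _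
  have hμqeq : ∀ k, ∑' d, μ k d * (d:ℝ) ^ q = σ k + ν k ^ q := by
    intro k
    rw [tsum_congr (fun d => mul_comm (μ k d) ((d:ℝ) ^ q))]
    exact (hσ k).tsum_eq
  have hν1 : ∀ k, 1 ≤ ν k := by
    intro k
    have hle : ∀ d : ℕ, μ k d ≤ μ k d * (d:ℝ) := by
      intro d
      rcases Nat.eq_zero_or_pos d with h | h
      · subst h; simp [hμ0 k]
      · have h1 : (1:ℝ) ≤ (d:ℝ) := by exact_mod_cast h
        nlinarith [hμnn k d]
    have h2 := Summable.tsum_le_tsum hle (hμs k) (hμmean k)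
    rwa [hμsum k, hμmeq k] at h2
  have hσ0 : ∀ k, 0 ≤ σ k := fun k =>
    Stmt14Aux.sigma_nonneg hq1 (hμnn k) (hμs k) (hμsum k) (hμmean k) (hμmeq k)
      (lt_of_lt_of_le one_pos (hν1 k)) (hμqm k) (hμqeq k)
  have hMnn : ∀ k, (0:ℝ) ≤ ∏ i ∈ Finset.range k, ν i := fun k =>
    Finset.prod_nonneg fun i _ => by linarith [hν1 i]
  have main : ∀ k, Summable (ρ k) ∧ (∑' m, ρ k m = 1) ∧
      Summable (fun m => ρ k m * (m:ℝ)) ∧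
      (∑' m, ρ k m * (m:ℝ) = ∏ i ∈ Finset.range k, ν i) ∧
      Summable (fun m => ρ k m * (m:ℝ) ^ q) ∧
      ∑' m, ρ k m * (m:ℝ) ^ q ≤ (∏ i ∈ Finset.range k, ν i) ^ q
        + ∑ i ∈ Finset.range k,
            (∏ j ∈ Finset.Ico (i + 1) k, ν j) ^ q * σ i * ∏ j ∈ Finset.range i, ν j := by
    intro k
    induction k with
    | zero =>
      have e0 : ∀ m : ℕ, ρ 0 m = if m = 1 then (1:ℝ) else 0 := hρ0
      have e1 : ∀ m : ℕ, ρ 0 m * (m:ℝ) = if m = 1 then (1:ℝ) else 0 := by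
        intro m
        rw [e0 m]
        by_cases h : m = 1 <;> simp [h]
      have e2 : ∀ m : ℕ, ρ 0 m * (m:ℝ) ^ q = if m = 1 then (1:ℝ) else 0 := by
        intro m
        rw [e0 m]
        by_cases h : m = 1 <;> simp [h]
      refine ⟨(hasSum_ite_eq 1 (1:ℝ)).summable.congr fun m => (e0 m).symm,
        by rw [tsum_congr e0]; exact tsum_ite_eq 1 1,
        (hasSum_ite_eq 1 (1:ℝ)).summable.congr fun m => (e1 m).symm,
        by rw [tsum_congr e1]; simp [tsum_ite_eq],
        (hasSum_ite_eq 1 (1:ℝ)).summable.congr fun m => (e2 m).symm, ?_⟩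
      rw [tsum_congr e2]
      simp [tsum_ite_eq, Real.one_rpow]
    | succ k ih =>
      obtain ⟨hρs, hρ1, hρms, hρmeq, hρqs, hρqle⟩ := ih
      obtain ⟨hw's, hmass', hms', hmeq', hqs', hqle'⟩ :=
        Stmt14Aux.step_lemma hq1 hq2 (hμnn k) (hμs k) (hμsum k) (hμmean k) (hμmeq k) (hν1 k)
          (hμqm k) (hμqeq k) (hσ0 k) (hρnn k) (hρnn (k+1)) hρs hρ1 hρms hρqs (hρpgf k)
      refine ⟨hw's, hmass', hms', ?_, hqs', ?_⟩
      · rw [hmeq', hρmeq, Finset.prod_range_succ]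
        ring
      · have hνq0 : (0:ℝ) ≤ ν k ^ q := Real.rpow_nonneg (by linarith [hν1 k]) q
        calc ∑' m, ρ (k+1) m * (m:ℝ) ^ q
            ≤ ν k ^ q * (∑' m, ρ k m * (m:ℝ) ^ q) + σ k * ∑' m, ρ k m * (m:ℝ) := hqle'
          _ ≤ ν k ^ q * ((∏ i ∈ Finset.range k, ν i) ^ q
              + ∑ i ∈ Finset.range k,
                  (∏ j ∈ Finset.Ico (i + 1) k, ν j) ^ q * σ i * ∏ j ∈ Finset.range i, ν j)
              + σ k * ∏ i ∈ Finset.range k, ν i := by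
              rw [hρmeq]
              exact add_le_add_left (mul_le_mul_of_nonneg_left hρqle hνq0) _
          _ = (∏ i ∈ Finset.range (k+1), ν i) ^ q
              + ∑ i ∈ Finset.range (k+1),
                  (∏ j ∈ Finset.Ico (i + 1) (k+1), ν j) ^ q * σ i
                    * ∏ j ∈ Finset.range i, ν j := by
              rw [Finset.sum_range_succ, Finset.prod_range_succ,
                Real.mul_rpow (hMnn k) (by linarith [hν1 k] : (0:ℝ) ≤ ν k),
                mul_add, Finset.mul_sum]
              have hterm : ∀ i ∈ Finset.range k,
                  ν k ^ q * ((∏ j ∈ Finset.Ico (i + 1) k, ν j) ^ q * σ i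
                    * ∏ j ∈ Finset.range i, ν j)
                  = (∏ j ∈ Finset.Ico (i + 1) (k+1), ν j) ^ q * σ i
                    * ∏ j ∈ Finset.range i, ν j := by
                intro i hi
                rw [Finset.mem_range] at hi
                rw [Finset.prod_Ico_succ_top (by omega : i + 1 ≤ k),
                  Real.mul_rpow (Finset.prod_nonneg fun j _ => by linarith [hν1 j])
                    (by linarith [hν1 k] : (0:ℝ) ≤ ν k)]
                ring
              rw [Finset.sum_congr rfl hterm]
              have hlast : (∏ j ∈ Finset.Ico (k + 1) (k+1), ν j) ^ q * σ k
                  * ∏ j ∈ Finset.range k, ν j = σ k * ∏ j ∈ Finset.range k, ν j := by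
                rw [Finset.Ico_self, Finset.prod_empty, Real.one_rpow, one_mul]
              rw [hlast]
              ring
  exact (main n).2.2.2.2.2
end

section
/- Let g_β(x) = log((e^{2β} e^x + 1)/(e^{2β} + e^x)) for β > 0. Then for all x ≥ 0, g_β(x) ≤ tanh(β) x. -/
open Real

private lemma tanh_eq_aux (β : ℝ) :
    Real.tanh β = (Real.exp (2 * β) - 1) / (Real.exp (2 * β) + 1) := by
  rw [Real.tanh_eq_sinh_div_cosh, Real.sinh_eq, Real.cosh_eq]
  have h1 : Real.exp (2 * β) = Real.exp β * Real.exp β := by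
    rw [← Real.exp_add]; ring_nf
  have h2 : Real.exp (-β) = (Real.exp β)⁻¹ := by rw [Real.exp_neg]
  have h3 : Real.exp β ≠ 0 := Real.exp_ne_zero β
  have h4 : Real.exp β + Real.exp (-β) ≠ 0 := by positivity
  have h5 : Real.exp (2 * β) + 1 ≠ 0 := by positivity
  rw [h1, h2] at *
  field_simp

/-- Lyons' function `g_β(x) = log((e^{2β} e^x + 1)/(e^{2β} + e^x))` satisfies
`g_β(x) ≤ tanh(β) x` for all `x ≥ 0`. -/
theorem stmt17 (β x : ℝ) (hβ : 0 < β) (hx : 0 ≤ x) :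
    Real.log ((Real.exp (2 * β) * Real.exp x + 1) / (Real.exp (2 * β) + Real.exp x))
      ≤ Real.tanh β * x := by
  set A := Real.exp (2 * β) with hA
  have hA1 : 1 < A := by
    rw [hA]; exact by rw [Real.one_lt_exp_iff]; positivity
  have hApos : 0 < A := by linarith
  set t := Real.tanh β with ht
  have htA : t = (A - 1) / (A + 1) := tanh_eq_aux β
  -- F x = t*x - (log(A e^x + 1) - log(A + e^x))
  set F : ℝ → ℝ := fun y => t * y - (Real.log (A * Real.exp y + 1) - Real.log (A + Real.exp y))
    with hF
  have hnum : ∀ y : ℝ, 0 < A * Real.exp y + 1 := fun y => by positivity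
  have hden : ∀ y : ℝ, 0 < A + Real.exp y := fun y => by positivity
  have hderiv : ∀ y : ℝ, HasDerivAt F
      (t - (A * Real.exp y / (A * Real.exp y + 1) - Real.exp y / (A + Real.exp y))) y := by
    intro y
    have h1 : HasDerivAt (fun z => A * Real.exp z + 1) (A * Real.exp y) y :=
      ((Real.hasDerivAt_exp y).const_mul A).add_const 1
    have h2 : HasDerivAt (fun z => A + Real.exp z) (Real.exp y) y :=
      (Real.hasDerivAt_exp y).const_add A
    have h1' := h1.log (hnum y).ne'
    have h2' := h2.log (hden y).ne'
    have h3 : HasDerivAt (fun z => t * z) t y := by simpa using (hasDerivAt_id y).const_mul t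
    exact h3.sub (h1'.sub h2')
  have hkey : ∀ y : ℝ, 0 ≤ y →
      0 ≤ t - (A * Real.exp y / (A * Real.exp y + 1) - Real.exp y / (A + Real.exp y)) := by
    intro y hy
    set u := Real.exp y with hu
    have hu1 : 1 ≤ u := by rw [hu]; exact Real.one_le_exp hy
    have hnum' : 0 < A * u + 1 := by positivity
    have hden' : 0 < A + u := by positivity
    rw [htA, sub_nonneg, div_sub_div _ _ hnum'.ne' hden'.ne', div_le_div_iff₀ (by positivity)
      (by positivity)]
    nlinarith [sq_nonneg (u - 1), mul_nonneg (mul_nonneg hApos.le (sq_nonneg (u - 1)))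
      (sub_nonneg.mpr hA1.le), mul_pos hnum' hden']
  have hmono : MonotoneOn F (Set.Ici (0 : ℝ)) := by
    apply monotoneOn_of_deriv_nonneg (convex_Ici 0)
    · exact Continuous.continuousOn (by
        fun_prop (disch := intro y; first | exact (hnum y).ne' | exact (hden y).ne'))
    · intro y hy
      exact (hderiv y).differentiableAt.differentiableWithinAt
    · intro y hy
      rw [interior_Ici] at hy
      rw [(hderiv y).deriv]
      exact hkey y (le_of_lt hy)
  have hF0 : F 0 = 0 := by
    simp [hF]
  have hFx : 0 ≤ F x := by
    have := hmono (Set.self_mem_Ici) (Set.mem_Ici.mpr hx) hx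
    rw [hF0] at this; exact this
  have hlog : Real.log ((A * Real.exp x + 1) / (A + Real.exp x))
      = Real.log (A * Real.exp x + 1) - Real.log (A + Real.exp x) :=
    Real.log_div (hnum x).ne' (hden x).ne'
  rw [hlog]
  simpa [hF] using hFx
end
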